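/- arXiv:2009.05372 — 8 statements merged into one kernel-verified Lean document; each statement's English description precedes it below -/
import Mathlib

section
/- Let k ∈ [0,1), μ ≥ 0, λ ∈ ℝ, s ≥ 1, and let h : [s,∞) → ℝ be continuous with h(t) ≥ 0 for all t ≥ s. Suppose w : [s,∞) → ℝ is twice continuously differentiable with w(s) = 0, w'(s) = 0, and w''(t) − λ² t^{−2k} w(t) + μ t^{−1} w'(t) = h(t) for all t ≥ s. Then w(t) ≥ 0 for all t ≥ s. -/
set_option maxHeartbeats 1600000 in
/-- Minimum-type principle for the operator `∂ₜ² − λ² t^{−2k} + μ t^{−1} ∂ₜ` on `[s,∞)`,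
`s ≥ 1`: a supersolution of the homogeneous equation with trivial initial conditions is
nonnegative. -/
theorem stmt8 (k μ lam s : ℝ) (hk0 : 0 ≤ k) (hk1 : k < 1) (hμ : 0 ≤ μ) (hs : 1 ≤ s)
    (h w : ℝ → ℝ)
    (hhcont : ContinuousOn h (Set.Ici s)) (hhnonneg : ∀ t : ℝ, s ≤ t → 0 ≤ h t)
    (hw : ContDiffOn ℝ 2 w (Set.Ici s))
    (hw0 : w s = 0) (hw1 : derivWithin w (Set.Ici s) s = 0)
    (hode : ∀ t : ℝ, s ≤ t →
      derivWithin (derivWithin w (Set.Ici s)) (Set.Ici s) t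
        - lam ^ 2 * t ^ (-(2 * k)) * w t
        + μ * t⁻¹ * derivWithin w (Set.Ici s) t = h t) :
    ∀ t : ℝ, s ≤ t → 0 ≤ w t := by
  intro t0 ht0
  by_contra hneg
  push_neg at hneg
  have hs0 : (0:ℝ) < s := lt_of_lt_of_le one_pos hs
  set W' : ℝ → ℝ := derivWithin w (Set.Ici s) with hW'def
  have hudiff : UniqueDiffOn ℝ (Set.Ici s) := uniqueDiffOn_Ici s
  have hw' : ContDiffOn ℝ 1 W' (Set.Ici s) := hw.derivWithin hudiff (by norm_num)
  have hwcont : ContinuousOn w (Set.Ici s) := hw.continuousOn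
  have hW'cont : ContinuousOn W' (Set.Ici s) := hw'.continuousOn
  have hder1 : ∀ t ∈ Set.Ici s, HasDerivWithinAt w (W' t) (Set.Ici s) t := fun t ht =>
    ((hw.differentiableOn (by norm_num)) t ht).hasDerivWithinAt
  have hder2 : ∀ t ∈ Set.Ici s,
      HasDerivWithinAt W' (derivWithin W' (Set.Ici s) t) (Set.Ici s) t := fun t ht =>
    ((hw'.differentiableOn (by norm_num)) t ht).hasDerivWithinAt
  have hD1 : ∀ t : ℝ, s < t → HasDerivAt w (W' t) t := fun t ht =>
    (hder1 t (le_of_lt ht)).hasDerivAt (Ici_mem_nhds ht)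
  have hD2 : ∀ t : ℝ, s < t → HasDerivAt W' (derivWithin W' (Set.Ici s) t) t := fun t ht =>
    (hder2 t (le_of_lt ht)).hasDerivAt (Ici_mem_nhds ht)
  set φ : ℝ → ℝ := fun t => t ^ μ * W' t with hφdef
  have hφcont : ContinuousOn φ (Set.Ici s) := by
    apply ContinuousOn.mul _ hW'cont
    exact continuousOn_id.rpow_const fun x hx =>
      Or.inl (ne_of_gt (lt_of_lt_of_le hs0 hx))
  -- derivative of φ at interior points
  have hφderiv : ∀ t : ℝ, s < t →
      HasDerivAt φ (t ^ μ * (h t + lam ^ 2 * t ^ (-(2 * k)) * w t)) t := by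
    intro t ht
    have ht0' : (0:ℝ) < t := lt_trans hs0 ht
    have hrp : HasDerivAt (fun x : ℝ => x ^ μ) (μ * t ^ (μ - 1)) t :=
      Real.hasDerivAt_rpow_const (Or.inl (ne_of_gt ht0'))
    have hmul := hrp.mul (hD2 t ht)
    have hode' := hode t (le_of_lt ht)
    have heq : μ * t ^ (μ - 1) * W' t + t ^ μ * derivWithin W' (Set.Ici s) t
        = t ^ μ * (h t + lam ^ 2 * t ^ (-(2 * k)) * w t) := by
      have hW2 : derivWithin W' (Set.Ici s) t
          = h t + lam ^ 2 * t ^ (-(2 * k)) * w t - μ * t⁻¹ * W' t := by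
        linarith
      rw [hW2, Real.rpow_sub ht0', Real.rpow_one]
      field_simp
      ring
    rw [← heq]
    exact hmul
  -- the bad set and its infimum
  set B : Set ℝ := {t : ℝ | s ≤ t ∧ t ≤ t0 ∧ w t < 0} with hBdef
  have hne : t0 ∈ B := ⟨ht0, le_rfl, hneg⟩
  have hbdd : BddBelow B := ⟨s, fun x hx => hx.1⟩
  set c : ℝ := sInf B with hcdef
  have hsc : s ≤ c := le_csInf ⟨t0, hne⟩ fun x hx => hx.1
  have hct0 : c ≤ t0 := csInf_le hbdd hne
  have hpos : ∀ τ : ℝ, s ≤ τ → τ < c → 0 ≤ w τ := by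
    intro τ hsτ hτc
    by_contra hwτ
    push_neg at hwτ
    exact absurd (csInf_le hbdd ⟨hsτ, le_trans (le_of_lt hτc) hct0, hwτ⟩) (not_le.2 hτc)
  have hwc : 0 ≤ w c := by
    rcases eq_or_lt_of_le hsc with hEq | hlt
    · rw [← hEq, hw0]
    · have hclos : c ∈ closure (Set.Ico s c) := by
        rw [closure_Ico (ne_of_lt hlt)]
        exact ⟨hsc, le_rfl⟩
      have hnb : (nhdsWithin c (Set.Ico s c)).NeBot :=
        mem_closure_iff_nhdsWithin_neBot.1 hclos
      have htend : Filter.Tendsto w (nhdsWithin c (Set.Ico s c)) (nhds (w c)) :=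
        ((hwcont c hsc).mono Set.Ico_subset_Ici_self).tendsto
      exact ge_of_tendsto htend (Filter.eventually_inf_principal.2
        (Filter.Eventually.of_forall fun x hx => hpos x hx.1 hx.2))
  have hwIcc : ∀ τ ∈ Set.Icc s c, 0 ≤ w τ := by
    intro τ hτ
    rcases lt_or_eq_of_le hτ.2 with hlt | hEq
    · exact hpos τ hτ.1 hlt
    · rw [hEq]; exact hwc
  -- Step A: φ is nonnegative at c
  have hφmono : MonotoneOn φ (Set.Icc s c) := by
    apply monotoneOn_of_deriv_nonneg (convex_Icc s c)
      (hφcont.mono fun x hx => hx.1)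
    · intro x hx
      rw [interior_Icc] at hx
      exact ((hφderiv x hx.1).differentiableAt).differentiableWithinAt
    · intro x hx
      rw [interior_Icc] at hx
      rw [(hφderiv x hx.1).deriv]
      have hx0 : (0:ℝ) ≤ x := le_of_lt (lt_trans hs0 hx.1)
      have h1 : 0 ≤ x ^ μ := Real.rpow_nonneg hx0 μ
      have h2 : 0 ≤ h x := hhnonneg x (le_of_lt hx.1)
      have h3 : 0 ≤ x ^ (-(2 * k)) := Real.rpow_nonneg hx0 _
      have h4 : 0 ≤ w x := hpos x (le_of_lt hx.1) hx.2
      positivity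
  have hφs : φ s = 0 := by simp [hφdef, ← hW'def, hw1]
  have hφc : 0 ≤ φ c := by
    have := hφmono ⟨le_rfl, hsc⟩ ⟨hsc, le_rfl⟩ hsc
    rwa [hφs] at this
  -- Step B: quantitative Gronwall near c
  set K : ℝ := lam ^ 2 * (c + 1) ^ μ with hKdef
  have hK0 : 0 ≤ K := mul_nonneg (sq_nonneg _) (Real.rpow_nonneg (by linarith) μ)
  set δ : ℝ := min 1 (1 / (K + 1)) with hδdef
  have hδpos : 0 < δ := lt_min one_pos (by positivity)
  have hδ1 : δ ≤ 1 := min_le_left _ _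
  have hδK : K * δ ^ 2 < 2 := by
    have h1 : δ ≤ 1 / (K + 1) := min_le_right _ _
    have h2 : K * δ ≤ K * (1 / (K + 1)) := mul_le_mul_of_nonneg_left h1 hK0
    have h3 : K * (1 / (K + 1)) < 1 := by
      rw [mul_one_div, div_lt_one (by linarith)]; linarith
    nlinarith [hδpos.le, hδ1]
  obtain ⟨b, hbB, hbδ⟩ := exists_lt_of_csInf_lt ⟨t0, hne⟩
    (lt_add_of_pos_right c hδpos)
  have hcb' : c ≤ b := csInf_le hbdd hbB
  have hcb : c < b := by
    rcases eq_or_lt_of_le hcb' with hEq | hlt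
    · exact absurd hbB.2.2 (not_lt.2 (by rwa [← hEq]))
    · exact hlt
  have hsb : Set.Icc c b ⊆ Set.Ici s := fun x hx => le_trans hsc hx.1
  -- minimum of w on [c,b]
  obtain ⟨τ0, hτ0I, hmin⟩ := isCompact_Icc.exists_isMinOn (Set.nonempty_Icc.2 hcb')
    (hwcont.mono hsb)
  set M : ℝ := -w τ0 with hMdef
  have hMb : -w b ≤ M := neg_le_neg (hmin ⟨hcb', le_rfl⟩)
  have hMpos : 0 < M := lt_of_lt_of_le (by linarith [hbB.2.2]) hMb
  have hlow : ∀ τ ∈ Set.Icc c b, -M ≤ w τ := by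
    intro τ hτ
    have := hmin hτ
    simp only [hMdef, neg_neg]
    exact this
  -- ψ := φ + K*M*x is monotone on [c,b]
  have hψmono : MonotoneOn (fun x => φ x + K * M * x) (Set.Icc c b) := by
    refine monotoneOn_of_deriv_nonneg (convex_Icc c b) ?_ ?_ ?_
    · exact (hφcont.mono hsb).add (continuousOn_const.mul continuousOn_id)
    · intro x hx
      rw [interior_Icc] at hx
      have hsx : s < x := lt_of_le_of_lt hsc hx.1
      have hlin : HasDerivAt (fun y : ℝ => K * M * y) (K * M) x := by
        simpa using (hasDerivAt_id x).const_mul (K * M)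
      exact (((hφderiv x hsx).add hlin).differentiableAt).differentiableWithinAt
    · intro x hx
      rw [interior_Icc] at hx
      have hsx : s < x := lt_of_le_of_lt hsc hx.1
      have hlin : HasDerivAt (fun y : ℝ => K * M * y) (K * M) x := by
        simpa using (hasDerivAt_id x).const_mul (K * M)
      have hd : HasDerivAt (fun x : ℝ => φ x + K * M * x)
          (x ^ μ * (h x + lam ^ 2 * x ^ (-(2 * k)) * w x) + K * M) x :=
        (hφderiv x hsx).add hlin
      rw [hd.deriv]
      have hx1 : (1:ℝ) ≤ x := le_trans hs (le_of_lt hsx)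
      have hx0 : (0:ℝ) ≤ x := by linarith
      have hp1 : x ^ (-(2 * k)) ≤ 1 :=
        Real.rpow_le_one_of_one_le_of_nonpos hx1 (by linarith)
      have hp0 : 0 ≤ x ^ (-(2 * k)) := Real.rpow_nonneg hx0 _
      have hxμ0 : 0 ≤ x ^ μ := Real.rpow_nonneg hx0 μ
      have hxμ : x ^ μ ≤ (c + 1) ^ μ :=
        Real.rpow_le_rpow hx0 (by linarith [hx.2, hbδ, hδ1]) hμ
      have hhx : 0 ≤ h x := hhnonneg x (le_of_lt hsx)
      have hwx : -M ≤ w x := hlow x ⟨le_of_lt hx.1, le_of_lt hx.2⟩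
      have hl2 : (0:ℝ) ≤ lam ^ 2 := sq_nonneg _
      -- x^μ * (h x + lam^2 * x^(-(2k)) * w x) + K*M*1 ≥ 0
      have key : -(lam ^ 2 * M) ≤ lam ^ 2 * x ^ (-(2 * k)) * w x := by
        have a1 : 0 ≤ lam ^ 2 * x ^ (-(2 * k)) * (w x + M) :=
          mul_nonneg (mul_nonneg hl2 hp0) (by linarith only [hwx])
        have a2 : 0 ≤ lam ^ 2 * M * (1 - x ^ (-(2 * k))) :=
          mul_nonneg (mul_nonneg hl2 hMpos.le) (sub_nonneg.2 hp1)
        nlinarith [a1, a2]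
      have key2 : -((c + 1) ^ μ * (lam ^ 2 * M)) ≤ x ^ μ * (lam ^ 2 * x ^ (-(2 * k)) * w x) := by
        have a1 : 0 ≤ x ^ μ * (lam ^ 2 * x ^ (-(2 * k)) * w x + lam ^ 2 * M) :=
          mul_nonneg hxμ0 (by linarith only [key])
        have a2 : 0 ≤ ((c + 1) ^ μ - x ^ μ) * (lam ^ 2 * M) :=
          mul_nonneg (sub_nonneg.2 hxμ) (mul_nonneg hl2 hMpos.le)
        nlinarith [a1, a2]
      have hxh : 0 ≤ x ^ μ * h x := mul_nonneg hxμ0 hhx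
      have hKM : K * M = (c + 1) ^ μ * (lam ^ 2 * M) := by rw [hKdef]; ring
      nlinarith [key2, hxh, hKM]
  -- lower bound for φ on [c,b]
  have hφlow : ∀ σ ∈ Set.Icc c b, -(K * M * (σ - c)) ≤ φ σ := by
    intro σ hσ
    have h2 : φ c + K * M * c ≤ φ σ + K * M * σ := hψmono ⟨le_rfl, hcb'⟩ hσ hσ.1
    linarith [hφc]
  -- lower bound for W' on (c,b)
  have hW'low : ∀ σ ∈ Set.Ioo c b, -(K * M * (σ - c)) ≤ W' σ := by
    intro σ hσ
    have hσI : σ ∈ Set.Icc c b := ⟨le_of_lt hσ.1, le_of_lt hσ.2⟩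
    have hσ1 : (1:ℝ) ≤ σ := le_trans hs (le_trans hsc hσI.1)
    have hμσ : 1 ≤ σ ^ μ := Real.one_le_rpow hσ1 hμ
    have h1 := hφlow σ hσI
    have hE0 : 0 ≤ K * M * (σ - c) :=
      mul_nonneg (mul_nonneg hK0 hMpos.le) (by linarith [hσI.1])
    -- φ σ = σ^μ * W' σ
    by_cases hWs : 0 ≤ W' σ
    · linarith
    · push_neg at hWs
      have a1 : 0 ≤ (σ ^ μ - 1) * (-W' σ) :=
        mul_nonneg (by linarith) (by linarith)
      have h3 : σ ^ μ * W' σ ≤ W' σ := by nlinarith [a1]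
      simp only [hφdef] at h1
      linarith
  -- χ := w + (K*M/2)*(x-c)^2 is monotone on [c,b]
  have hχmono : MonotoneOn (fun x => w x + K * M / 2 * (x - c) ^ 2) (Set.Icc c b) := by
    refine monotoneOn_of_deriv_nonneg (convex_Icc c b) ?_ ?_ ?_
    · exact (hwcont.mono hsb).add (continuousOn_const.mul
        ((continuousOn_id.sub continuousOn_const).pow 2))
    · intro x hx
      rw [interior_Icc] at hx
      have hsx : s < x := lt_of_le_of_lt hsc hx.1
      exact (((hD1 x hsx).add ((((hasDerivAt_id x).sub_const c).pow 2).const_mul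
        (K * M / 2))).differentiableAt).differentiableWithinAt
    · intro x hx
      rw [interior_Icc] at hx
      have hsx : s < x := lt_of_le_of_lt hsc hx.1
      have hd2 : HasDerivAt (fun x : ℝ => K * M / 2 * (x - c) ^ 2)
          (K * M * (x - c)) x := by
        have hb2 := (((hasDerivAt_id x).sub_const c).pow 2).const_mul (K * M / 2)
        refine hb2.congr_deriv ?_
        simp only [id, Nat.reduceSub, pow_one, mul_one, Nat.cast_ofNat]
        ring
      have hd3 : HasDerivAt (fun x : ℝ => w x + K * M / 2 * (x - c) ^ 2)
          (W' x + K * M * (x - c)) x := (hD1 x hsx).add hd2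
      rw [hd3.deriv]
      have := hW'low x hx
      linarith
  -- conclude
  have hfin : w c + K * M / 2 * (c - c) ^ 2 ≤ w τ0 + K * M / 2 * (τ0 - c) ^ 2 :=
    hχmono ⟨le_rfl, hcb'⟩ hτ0I hτ0I.1
  rw [sub_self] at hfin
  norm_num at hfin
  have hτ0c : 0 ≤ τ0 - c := by linarith [hτ0I.1]
  have hτ0δ : τ0 - c ≤ δ := by linarith [hτ0I.2, hbδ]
  have hsq : (τ0 - c) ^ 2 ≤ δ ^ 2 := by nlinarith
  -- w c ≤ w τ0 + K*M/2*(τ0-c)^2 = -M + ...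
  have : 0 ≤ -M + K * M / 2 * δ ^ 2 := by
    have h1 : K * M / 2 * (τ0 - c) ^ 2 ≤ K * M / 2 * δ ^ 2 :=
      mul_le_mul_of_nonneg_left hsq (by positivity)
    have h2 : w τ0 = -M := by simp [hMdef]
    linarith [hfin, h1, hwc, h2]
  nlinarith [mul_pos hMpos (by linarith : (0:ℝ) < 2 - K * δ ^ 2)]
end

section
/- Let k ∈ [0,1), μ ≥ 2−k, λ > 0, and s ≥ 1. Suppose y₀ : [s,∞) → ℝ is twice continuously differentiable with y₀(s) = 1, y₀'(s) = 0, and y₀''(t) − λ² t^{−2k} y₀(t) + μ t^{−1} y₀'(t) = 0 for all t ≥ s. Then y₀(t) ≥ s^{(μ−k)/2} t^{(k−μ)/2} cosh(λ(φ_k(t) − φ_k(s))) for all t ≥ s. -/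
open Set Real Filter Topology

noncomputable def Cf (lam k ps x : ℝ) : ℝ := Real.cosh (lam * (x ^ (1-k)/(1-k) - ps))
noncomputable def Sf (lam k ps x : ℝ) : ℝ := Real.sinh (lam * (x ^ (1-k)/(1-k) - ps))
noncomputable def Zf (a lam k ps x : ℝ) : ℝ := x ^ (-a) * Cf lam k ps x
noncomputable def Z1f (a lam k ps x : ℝ) : ℝ :=
  -a * x ^ (-a-1) * Cf lam k ps x + lam * x ^ (-a + -k) * Sf lam k ps x
noncomputable def Z2f (a lam k ps x : ℝ) : ℝ :=
  (-a * ((-a-1) * (x ^ (-a-1) / x)) * Cf lam k ps x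
    + (-a * x ^ (-a-1)) * (Sf lam k ps x * (lam * x ^ (-k))))
  + ((lam * ((-a + -k) * (x ^ (-a + -k) / x))) * Sf lam k ps x
    + (lam * x ^ (-a + -k)) * (Cf lam k ps x * (lam * x ^ (-k))))

theorem l_hpow (p x : ℝ) (hx : 0 < x) : HasDerivAt (fun y : ℝ => y ^ p) (p * (x ^ p / x)) x := by
  have h := Real.hasDerivAt_rpow_const (x := x) (p := p) (Or.inl hx.ne')
  convert h using 1
  rw [Real.rpow_sub hx, Real.rpow_one]

theorem l_phi (lam k ps x : ℝ) (hx : 0 < x) (hk : k < 1) :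
    HasDerivAt (fun y : ℝ => lam * (y ^ (1-k)/(1-k) - ps)) (lam * x ^ (-k)) x := by
  have h := (((l_hpow (1-k) x hx).div_const (1-k)).sub_const ps).const_mul lam
  refine h.congr_deriv (Eq.symm ?_)
  have e : x ^ (1 - k) = x ^ (-k) * x := by
    rw [show (1:ℝ) - k = -k + 1 by ring, Real.rpow_add_one hx.ne']
  rw [e]
  have : (1:ℝ) - k ≠ 0 := by linarith
  field_simp

theorem l_C (lam k ps x : ℝ) (hx : 0 < x) (hk : k < 1) :
    HasDerivAt (Cf lam k ps) (Sf lam k ps x * (lam * x ^ (-k))) x :=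
  (l_phi lam k ps x hx hk).cosh

theorem l_S (lam k ps x : ℝ) (hx : 0 < x) (hk : k < 1) :
    HasDerivAt (Sf lam k ps) (Cf lam k ps x * (lam * x ^ (-k))) x :=
  (l_phi lam k ps x hx hk).sinh

theorem l_Z (a lam k ps x : ℝ) (hx : 0 < x) (hk : k < 1) :
    HasDerivAt (Zf a lam k ps) (Z1f a lam k ps x) x := by
  have h := (l_hpow (-a) x hx).mul (l_C lam k ps x hx hk)
  refine h.congr_deriv (Eq.symm ?_)
  unfold Z1f
  have e1 : x ^ (-a-1) = x ^ (-a) / x := by rw [Real.rpow_sub hx, Real.rpow_one]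
  have e2 : x ^ (-a + -k) = x ^ (-a) * x ^ (-k) := Real.rpow_add hx _ _
  rw [e1, e2]; ring

theorem l_Z1 (a lam k ps x : ℝ) (hx : 0 < x) (hk : k < 1) :
    HasDerivAt (Z1f a lam k ps) (Z2f a lam k ps x) x := by
  have h1 := ((l_hpow (-a-1) x hx).const_mul (-a)).mul (l_C lam k ps x hx hk)
  have h2 := ((l_hpow (-a + -k) x hx).const_mul lam).mul (l_S lam k ps x hx hk)
  exact h1.add h2

theorem l_Zpos (a lam k ps x : ℝ) (hx : 0 < x) : 0 < Zf a lam k ps x :=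
  mul_pos (Real.rpow_pos_of_pos hx _) (Real.cosh_pos _)

theorem l_zode (a lam k ps x μ c : ℝ) (hx : 0 < x) (hμ : μ = 2*a + k) (hc : c = a * (a + k - 1)) :
    Z2f a lam k ps x = lam^2 * x^(-(2*k)) * Zf a lam k ps x - c * (Zf a lam k ps x / x / x)
      - μ * x⁻¹ * Z1f a lam k ps x := by
  have e1 : x ^ (-a-1) = x ^ (-a) / x := by rw [Real.rpow_sub hx, Real.rpow_one]
  have e2 : x ^ (-a + -k) = x ^ (-a) * x ^ (-k) := Real.rpow_add hx _ _
  have e3 : x ^ (-(2*k)) = x ^ (-k) * x ^ (-k) := by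
    rw [show -(2*k) = -k + -k by ring, Real.rpow_add hx]
  unfold Z2f Zf Z1f
  rw [e1, e2, e3, hμ, hc]
  field_simp
  ring

/-- Lower bound for the solution `y₀` of `y'' − λ² t^{−2k} y + μ t^{−1} y' = 0` with
`y₀(s) = 1`, `y₀'(s) = 0`, for `μ ≥ 2 − k`: with `φ_k(t) = t^{1−k}/(1−k)`,
`y₀(t) ≥ s^{(μ−k)/2} t^{(k−μ)/2} cosh(λ(φ_k(t) − φ_k(s)))`. -/
theorem stmt9 (k μ lam s : ℝ) (hk0 : 0 ≤ k) (hk1 : k < 1) (hμ : 2 - k ≤ μ)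
    (hlam : 0 < lam) (hs : 1 ≤ s)
    (y₀ : ℝ → ℝ) (hy : ContDiffOn ℝ 2 y₀ (Set.Ici s))
    (h0 : y₀ s = 1) (h1 : derivWithin y₀ (Set.Ici s) s = 0)
    (hode : ∀ t : ℝ, s ≤ t →
      derivWithin (derivWithin y₀ (Set.Ici s)) (Set.Ici s) t
        - lam ^ 2 * t ^ (-(2 * k)) * y₀ t
        + μ * t⁻¹ * derivWithin y₀ (Set.Ici s) t = 0) :
    ∀ t : ℝ, s ≤ t →
      y₀ t ≥ s ^ ((μ - k) / 2) * t ^ ((k - μ) / 2)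
        * Real.cosh (lam * (t ^ (1 - k) / (1 - k) - s ^ (1 - k) / (1 - k))) := by
  have hs0 : (0:ℝ) < s := lt_of_lt_of_le one_pos hs
  set a := (μ - k) / 2 with ha_def
  set c := a * (a + k - 1) with hc_def
  have hμa : μ = 2*a + k := by rw [ha_def]; ring
  have ha : 0 < a := by rw [ha_def]; linarith
  have hcn : 0 ≤ c := by
    rw [hc_def]; apply mul_nonneg ha.le; rw [ha_def]; linarith
  set ps := s ^ (1-k) / (1-k) with hps_def
  set y1 := derivWithin y₀ (Set.Ici s) with hy1_def
  set y2 := derivWithin y1 (Set.Ici s) with hy2_def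
  have hpos : ∀ x ∈ Ici s, (0:ℝ) < x := fun x hx => lt_of_lt_of_le hs0 hx
  have hyd : ∀ x ∈ Ici s, HasDerivWithinAt y₀ (y1 x) (Ici s) x := fun x hx =>
    ((hy.differentiableOn (by norm_num)) x hx).hasDerivWithinAt
  have hy1cd : ContDiffOn ℝ 1 y1 (Ici s) :=
    hy.derivWithin (uniqueDiffOn_Ici s) (by norm_num)
  have hy1d : ∀ x ∈ Ici s, HasDerivWithinAt y1 (y2 x) (Ici s) x := fun x hx =>
    ((hy1cd.differentiableOn one_ne_zero) x hx).hasDerivWithinAt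
  have hycont : ContinuousOn y₀ (Ici s) := hy.continuousOn
  have hode' : ∀ x : ℝ, s ≤ x → y2 x = lam^2 * x^(-(2*k)) * y₀ x - μ * x⁻¹ * y1 x := by
    intro x hx; have := hode x hx; linarith
  -- the Wronskian
  set W : ℝ → ℝ := fun x => x ^ μ * (y₀ x * Z1f a lam k ps x - y1 x * Zf a lam k ps x)
    with hW_def
  have hWd : ∀ x ∈ Ici s, HasDerivWithinAt W
      (-(c * (x ^ μ / x / x) * (y₀ x * Zf a lam k ps x))) (Ici s) x := by
    intro x hx
    have hx0 := hpos x hx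
    have h := ((l_hpow μ x hx0).hasDerivWithinAt).mul
      (((hyd x hx).mul ((l_Z1 a lam k ps x hx0 hk1).hasDerivWithinAt)).sub
        ((hy1d x hx).mul ((l_Z a lam k ps x hx0 hk1).hasDerivWithinAt)))
    rw [hW_def]
    refine h.congr_deriv (Eq.symm ?_)
    rw [hode' x hx, l_zode a lam k ps x μ c hx0 hμa hc_def]
    simp only [Pi.mul_apply, Pi.sub_apply]
    field_simp
    ring
  -- value of things at s
  have hsas : s ^ a * s ^ (-a) = 1 := by
    rw [← Real.rpow_add hs0]; simp
  have hZs : Zf a lam k ps s = s ^ (-a) := by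
    simp [Zf, Cf, ← hps_def]
  have hZ1s : Z1f a lam k ps s = -a * s ^ (-a-1) := by
    simp [Z1f, Sf, Cf, ← hps_def]
  -- main argument
  intro t ht
  have hgoal_eq : ∀ x : ℝ,
      s ^ a * x ^ ((k - μ)/2) * Real.cosh (lam * (x ^ (1-k)/(1-k) - ps))
        = s ^ a * Zf a lam k ps x := by
    intro x
    rw [show (k - μ)/2 = -a by rw [ha_def]; ring]
    simp only [Zf, Cf]
    ring
  rw [ge_iff_le, hgoal_eq t]
  by_contra hcon
  push_neg at hcon
  set SS : Set ℝ := {x | s ≤ x ∧ y₀ x < s ^ a * Zf a lam k ps x} with hSS_def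
  have hne : SS.Nonempty := ⟨t, ht, hcon⟩
  have hbd : BddBelow SS := ⟨s, fun x hx => hx.1⟩
  set t₀ := sInf SS with ht0_def
  have ht₀s : s ≤ t₀ := le_csInf hne fun x hx => hx.1
  -- t₀ > s
  have hFd : HasDerivWithinAt (fun x => y₀ x - s ^ a * Zf a lam k ps x) (a / s) (Ici s) s := by
    have h := (hyd s self_mem_Ici).sub
      (((l_Z a lam k ps s hs0 hk1).hasDerivWithinAt).const_mul (s ^ a))
    refine h.congr_deriv (Eq.symm ?_)
    rw [h1, hZ1s]
    have e : s ^ a * s ^ (-a-1) = s⁻¹ := by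
      rw [← Real.rpow_add hs0, show a + (-a-1) = (-1:ℝ) by ring, Real.rpow_neg_one]
    rw [show (0:ℝ) - s ^ a * (-a * s ^ (-a-1)) = a * (s ^ a * s ^ (-a-1)) by ring, e,
      div_eq_mul_inv]
  have hslope := hasDerivWithinAt_iff_tendsto_slope.mp hFd
  rw [Set.Ici_sdiff_left] at hslope
  have hev : ∀ᶠ x in 𝓝[Ioi s] s,
      0 < slope (fun x => y₀ x - s ^ a * Zf a lam k ps x) s x :=
    hslope.eventually (eventually_gt_nhds (by positivity))
  rw [Filter.eventually_iff, Metric.mem_nhdsWithin_iff] at hev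
  obtain ⟨ε, hε, hball⟩ := hev
  have hFs : y₀ s - s ^ a * Zf a lam k ps s = 0 := by rw [h0, hZs, hsas]; ring
  have hSlb : ∀ x ∈ SS, s + ε ≤ x := by
    intro x hx
    by_contra hxe
    push_neg at hxe
    have hxs : s < x := by
      rcases lt_or_eq_of_le hx.1 with h | h
      · exact h
      · exfalso; rw [← h] at hx
        have := hx.2
        rw [h0, hZs, hsas] at this
        exact lt_irrefl _ this
    have hmem : x ∈ Metric.ball s ε ∩ Ioi s := by
      constructor
      · rw [Metric.mem_ball, Real.dist_eq, abs_of_pos (by linarith)]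
        linarith
      · exact hxs
    have hsl : 0 < slope (fun x => y₀ x - s ^ a * Zf a lam k ps x) s x := hball hmem
    simp only [slope_def_field] at hsl
    have hnum : y₀ x - s ^ a * Zf a lam k ps x - (y₀ s - s ^ a * Zf a lam k ps s) ≤ 0 := by
      have := hx.2
      linarith [hFs]
    have : (y₀ x - s ^ a * Zf a lam k ps x - (y₀ s - s ^ a * Zf a lam k ps s)) / (x - s) ≤ 0 :=
      div_nonpos_of_nonpos_of_nonneg hnum (by linarith)
    linarith
  have hst₀ : s < t₀ := lt_of_lt_of_le (by linarith) (le_csInf hne hSlb)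
  -- y₀ t₀ ≤ s^a * Z t₀
  have hZcont : ContinuousOn (Zf a lam k ps) (Ici s) := fun x hx =>
    ((l_Z a lam k ps x (hpos x hx) hk1).continuousAt).continuousWithinAt
  have hFcont : ContinuousOn (fun x => y₀ x - s ^ a * Zf a lam k ps x) (Ici s) :=
    hycont.sub (continuousOn_const.mul hZcont)
  have ht₀cl : t₀ ∈ closure SS := (isGLB_csInf hne hbd).mem_closure hne
  have hFt₀ : y₀ t₀ ≤ s ^ a * Zf a lam k ps t₀ := by
    have hct : ContinuousWithinAt (fun x => y₀ x - s ^ a * Zf a lam k ps x) SS t₀ :=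
      (hFcont t₀ ht₀s).mono (fun x hx => hx.1)
    have hnb : (𝓝[SS] t₀).NeBot := mem_closure_iff_nhdsWithin_neBot.mp ht₀cl
    have hle : y₀ t₀ - s ^ a * Zf a lam k ps t₀ ≤ 0 :=
      le_of_tendsto hct (eventually_mem_nhdsWithin.mono fun x hx => sub_nonpos.mpr hx.2.le)
    linarith
  -- positivity of y₀ before t₀
  have hyge : ∀ x ∈ Ico s t₀, s ^ a * Zf a lam k ps x ≤ y₀ x := by
    intro x hx
    by_contra hxx
    push_neg at hxx
    exact absurd (csInf_le hbd ⟨hx.1, hxx⟩) (not_le.mpr hx.2)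
  have hypos : ∀ x ∈ Ico s t₀, 0 < y₀ x := fun x hx =>
    lt_of_lt_of_le (mul_pos (Real.rpow_pos_of_pos hs0 a) (l_Zpos a lam k ps x (hpos x hx.1)))
      (hyge x hx)
  -- W is antitone on [s, t₀]
  have hWcont' : ContinuousOn W (Ici s) := fun x hx => (hWd x hx).continuousWithinAt
  have hWcont : ContinuousOn W (Icc s t₀) := hWcont'.mono Icc_subset_Ici_self
  have hWderiv : ∀ x ∈ Ioo s t₀, HasDerivAt W
      (-(c * (x ^ μ / x / x) * (y₀ x * Zf a lam k ps x))) x := fun x hx =>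
    (hWd x (le_of_lt hx.1)).hasDerivAt (Ici_mem_nhds hx.1)
  have hWanti : AntitoneOn W (Icc s t₀) := by
    apply antitoneOn_of_deriv_nonpos (convex_Icc s t₀) hWcont
    · intro x hx
      rw [interior_Icc] at hx
      exact (hWderiv x hx).differentiableAt.differentiableWithinAt
    · intro x hx
      rw [interior_Icc] at hx
      rw [(hWderiv x hx).deriv]
      have hx0 : (0:ℝ) < x := hpos x hx.1.le
      have hyp := hypos x ⟨hx.1.le, hx.2⟩
      have hZp := l_Zpos a lam k ps x hx0
      have hxp : 0 < x ^ μ / x / x := by positivity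
      have : 0 ≤ c * (x ^ μ / x / x) * (y₀ x * Zf a lam k ps x) :=
        mul_nonneg (mul_nonneg hcn hxp.le) (mul_nonneg hyp.le hZp.le)
      linarith
  have hWs : W s = -(a * (s ^ μ * s ^ (-a-1))) := by
    rw [hW_def]
    simp only
    rw [h0, h1, hZ1s]
    ring
  have hWsneg : W s < 0 := by
    rw [hWs]
    have h1p : 0 < s ^ μ := Real.rpow_pos_of_pos hs0 μ
    have h2p : 0 < s ^ (-a-1) := Real.rpow_pos_of_pos hs0 _
    have : 0 < a * (s ^ μ * s ^ (-a-1)) := mul_pos ha (mul_pos h1p h2p)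
    linarith
  have hWneg : ∀ x ∈ Icc s t₀, W x < 0 := fun x hx =>
    lt_of_le_of_lt (hWanti (left_mem_Icc.mpr hst₀.le) hx hx.1) hWsneg
  -- G = y₀ / Z is strictly monotone on [s, t₀]
  have hGcont : ContinuousOn (fun x => y₀ x / Zf a lam k ps x) (Icc s t₀) :=
    ContinuousOn.div (hycont.mono Icc_subset_Ici_self) (hZcont.mono Icc_subset_Ici_self)
      (fun x hx => (l_Zpos a lam k ps x (hpos x hx.1)).ne')
  have hGderiv : ∀ x ∈ Ioo s t₀, HasDerivAt (fun x => y₀ x / Zf a lam k ps x)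
      ((y1 x * Zf a lam k ps x - y₀ x * Z1f a lam k ps x) / (Zf a lam k ps x) ^ 2) x := by
    intro x hx
    have hx0 : (0:ℝ) < x := hpos x hx.1.le
    exact ((hyd x hx.1.le).hasDerivAt (Ici_mem_nhds hx.1)).div
      (l_Z a lam k ps x hx0 hk1) (l_Zpos a lam k ps x hx0).ne'
  have hGmono : StrictMonoOn (fun x => y₀ x / Zf a lam k ps x) (Icc s t₀) := by
    apply strictMonoOn_of_deriv_pos (convex_Icc s t₀) hGcont
    intro x hx
    rw [interior_Icc] at hx
    rw [(hGderiv x hx).deriv]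
    have hx0 : (0:ℝ) < x := hpos x hx.1.le
    have hZp := l_Zpos a lam k ps x hx0
    apply div_pos _ (by positivity)
    have hw := hWneg x ⟨hx.1.le, hx.2.le⟩
    rw [hW_def] at hw
    simp only at hw
    have hxm : 0 < x ^ μ := Real.rpow_pos_of_pos hx0 μ
    by_contra hnn
    push_neg at hnn
    have h2 : 0 ≤ y₀ x * Z1f a lam k ps x - y1 x * Zf a lam k ps x := by linarith
    have := mul_nonneg hxm.le h2
    linarith
  have hGlt : y₀ s / Zf a lam k ps s < y₀ t₀ / Zf a lam k ps t₀ :=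
    hGmono (left_mem_Icc.mpr hst₀.le) (right_mem_Icc.mpr hst₀.le) hst₀
  have hGs : y₀ s / Zf a lam k ps s = s ^ a := by
    rw [h0, hZs, Real.rpow_neg hs0.le]
    simp
  rw [hGs] at hGlt
  have hZt₀ : 0 < Zf a lam k ps t₀ := l_Zpos a lam k ps t₀ (hpos t₀ ht₀s)
  rw [lt_div_iff₀ hZt₀] at hGlt
  linarith
end

section
/- Let k ∈ [0,1), let μ ≥ 0 satisfy μ ≤ k or μ ≥ 2−k, let λ > 0, and let s ≥ 1. Suppose y₁ : [s,∞) → ℝ is twice continuously differentiable with y₁(s) = 0, y₁'(s) = 1, and y₁''(t) − λ² t^{−2k} y₁(t) + μ t^{−1} y₁'(t) = 0 for all t ≥ s. Then y₁(t) ≥ s^{(μ+k)/2} t^{(k−μ)/2} sinh(λ(φ_k(t) − φ_k(s)))/λ for all t ≥ s. -/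
open Set Real

noncomputable def GF (k μ lam s t : ℝ) : ℝ :=
  s ^ ((μ + k) / 2) * t ^ ((k - μ) / 2)
    * Real.sinh (lam * (t ^ (1 - k) / (1 - k) - s ^ (1 - k) / (1 - k))) / lam

noncomputable def GF1 (k μ lam s t : ℝ) : ℝ :=
  s ^ ((μ + k) / 2) *
    ((k - μ) / 2 / lam * t ^ ((k - μ) / 2 - 1)
       * Real.sinh (lam * (t ^ (1 - k) / (1 - k) - s ^ (1 - k) / (1 - k)))
     + t ^ ((k - μ) / 2 - k)
       * Real.cosh (lam * (t ^ (1 - k) / (1 - k) - s ^ (1 - k) / (1 - k))))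

noncomputable def GF2 (k μ lam s t : ℝ) : ℝ :=
  s ^ ((μ + k) / 2) *
    ((k - μ) / 2 * ((k - μ) / 2 - 1) / lam * t ^ ((k - μ) / 2 - 2)
       * Real.sinh (lam * (t ^ (1 - k) / (1 - k) - s ^ (1 - k) / (1 - k)))
     + (2 * ((k - μ) / 2) - k) * t ^ ((k - μ) / 2 - k - 1)
       * Real.cosh (lam * (t ^ (1 - k) / (1 - k) - s ^ (1 - k) / (1 - k)))
     + lam * t ^ ((k - μ) / 2 - 2 * k)
       * Real.sinh (lam * (t ^ (1 - k) / (1 - k) - s ^ (1 - k) / (1 - k))))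

lemma hasDerivAt_arg (k lam d : ℝ) (hk1 : k < 1) {t : ℝ} (ht : 0 < t) :
    HasDerivAt (fun t : ℝ => lam * (t ^ (1 - k) / (1 - k) - d)) (lam * t ^ (-k)) t := by
  have hne : (1 : ℝ) - k ≠ 0 := by intro h; exact absurd (by linarith : (1:ℝ) ≤ k) (not_le.2 hk1)
  have h1 : HasDerivAt (fun t : ℝ => t ^ (1 - k)) ((1 - k) * t ^ (1 - k - 1)) t :=
    Real.hasDerivAt_rpow_const (Or.inl ht.ne')
  have h2 := ((h1.div_const (1 - k)).sub_const d).const_mul lam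
  convert h2 using 1
  · rfl
  · rfl
  rw [show (1 : ℝ) - k - 1 = -k by ring]
  field_simp

lemma hasDerivAt_GF (k μ lam s : ℝ) (hk1 : k < 1) (hlam : lam ≠ 0) {t : ℝ} (ht : 0 < t) :
    HasDerivAt (GF k μ lam s) (GF1 k μ lam s t) t := by
  have harg := hasDerivAt_arg k lam (s ^ (1 - k) / (1 - k)) hk1 ht
  have hS := harg.sinh
  have hp : HasDerivAt (fun t : ℝ => t ^ ((k - μ) / 2)) ((k - μ) / 2 * t ^ ((k - μ) / 2 - 1)) t :=
    Real.hasDerivAt_rpow_const (Or.inl ht.ne')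
  have h := ((hp.mul hS).const_mul (s ^ ((μ + k) / 2))).div_const lam
  have heq : GF k μ lam s = fun t : ℝ => s ^ ((μ + k) / 2) *
      (t ^ ((k - μ) / 2) *
        Real.sinh (lam * (t ^ (1 - k) / (1 - k) - s ^ (1 - k) / (1 - k)))) / lam := by
    funext u; unfold GF; ring
  rw [heq]
  convert h using 1
  · rfl
  · rfl
  · rfl
  unfold GF1
  rw [show (k - μ) / 2 - k = (k - μ) / 2 + (-k) by ring, Real.rpow_add ht,
    eq_div_iff hlam]
  field_simp

lemma hasDerivAt_GF1 (k μ lam s : ℝ) (hk1 : k < 1) (hlam : lam ≠ 0) {t : ℝ} (ht : 0 < t) :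
    HasDerivAt (GF1 k μ lam s) (GF2 k μ lam s t) t := by
  have harg := hasDerivAt_arg k lam (s ^ (1 - k) / (1 - k)) hk1 ht
  have hS := harg.sinh
  have hC := harg.cosh
  have hp1 : HasDerivAt (fun t : ℝ => t ^ ((k - μ) / 2 - 1))
      (((k - μ) / 2 - 1) * t ^ ((k - μ) / 2 - 1 - 1)) t :=
    Real.hasDerivAt_rpow_const (Or.inl ht.ne')
  have hp2 : HasDerivAt (fun t : ℝ => t ^ ((k - μ) / 2 - k))
      (((k - μ) / 2 - k) * t ^ ((k - μ) / 2 - k - 1)) t :=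
    Real.hasDerivAt_rpow_const (Or.inl ht.ne')
  have h := (((hp1.mul hS).const_mul ((k - μ) / 2 / lam)).add (hp2.mul hC)).const_mul
    (s ^ ((μ + k) / 2))
  have heq : GF1 k μ lam s = fun t : ℝ => s ^ ((μ + k) / 2) *
      ((k - μ) / 2 / lam * (t ^ ((k - μ) / 2 - 1) *
        Real.sinh (lam * (t ^ (1 - k) / (1 - k) - s ^ (1 - k) / (1 - k))))
       + t ^ ((k - μ) / 2 - k) *
        Real.cosh (lam * (t ^ (1 - k) / (1 - k) - s ^ (1 - k) / (1 - k)))) := by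
    funext u; unfold GF1; ring
  rw [heq]
  convert h using 1
  · rfl
  · rfl
  · rfl
  unfold GF2
  rw [show (k - μ) / 2 - 1 - 1 = (k - μ) / 2 + (-1) + (-1) by ring,
    show (k - μ) / 2 - 2 = (k - μ) / 2 + (-1) + (-1) by ring,
    show (k - μ) / 2 - k - 1 = (k - μ) / 2 + (-k) + (-1) by ring,
    show (k - μ) / 2 - 2 * k = (k - μ) / 2 + (-k) + (-k) by ring,
    show (k - μ) / 2 - k = (k - μ) / 2 + (-k) by ring,
    show (k - μ) / 2 - 1 = (k - μ) / 2 + (-1) by ring]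
  simp only [Real.rpow_add ht, Real.rpow_neg_one]
  field_simp
  ring

lemma GF_ode (k μ lam s : ℝ) (hk0 : 0 ≤ k) (hk1 : k < 1) (hμ0 : 0 ≤ μ)
    (hμ : μ ≤ k ∨ 2 - k ≤ μ) (hlam : 0 < lam) (hs : 1 ≤ s) {t : ℝ} (hst : s ≤ t) :
    GF2 k μ lam s t + μ * t⁻¹ * GF1 k μ lam s t
      - lam ^ 2 * t ^ (-(2 * k)) * GF k μ lam s t ≤ 0 := by
  have hspos : (0 : ℝ) < s := lt_of_lt_of_le one_pos hs
  have ht : (0 : ℝ) < t := lt_of_lt_of_le hspos hst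
  have hSnn : 0 ≤ Real.sinh (lam * (t ^ (1 - k) / (1 - k) - s ^ (1 - k) / (1 - k))) := by
    rw [Real.sinh_nonneg_iff]
    apply mul_nonneg hlam.le
    rw [sub_nonneg, div_le_div_iff_of_pos_right (by linarith : (0:ℝ) < 1 - k)]
    exact Real.rpow_le_rpow hspos.le hst (by linarith)
  have key : GF2 k μ lam s t + μ * t⁻¹ * GF1 k μ lam s t
      - lam ^ 2 * t ^ (-(2 * k)) * GF k μ lam s t
      = ((k - μ) * (k + μ - 2) / (4 * lam)) *
        (s ^ ((μ + k) / 2) * (t ^ ((k - μ) / 2) * t⁻¹ * t⁻¹)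
          * Real.sinh (lam * (t ^ (1 - k) / (1 - k) - s ^ (1 - k) / (1 - k)))) := by
    unfold GF GF1 GF2
    rw [show (k - μ) / 2 - 2 = (k - μ) / 2 + (-1) + (-1) by ring,
      show (k - μ) / 2 - k - 1 = (k - μ) / 2 + (-k) + (-1) by ring,
      show (k - μ) / 2 - 2 * k = (k - μ) / 2 + (-k) + (-k) by ring,
      show (k - μ) / 2 - k = (k - μ) / 2 + (-k) by ring,
      show (k - μ) / 2 - 1 = (k - μ) / 2 + (-1) by ring,
      show -(2 * k) = (-k) + (-k) by ring]
    simp only [Real.rpow_add ht, Real.rpow_neg_one]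
    field_simp
    ring
  rw [key]
  apply mul_nonpos_of_nonpos_of_nonneg
  · apply div_nonpos_of_nonpos_of_nonneg _ (by linarith)
    rcases hμ with h | h
    · nlinarith
    · nlinarith
  · apply mul_nonneg _ hSnn
    have h1 : (0:ℝ) < s ^ ((μ + k) / 2) := Real.rpow_pos_of_pos hspos _
    have h2 : (0:ℝ) < t ^ ((k - μ) / 2) := Real.rpow_pos_of_pos ht _
    positivity

lemma ode_comp {s μ lam k : ℝ} (hs : 1 ≤ s) (hμ0 : 0 ≤ μ)
    (f f1 f2 : ℝ → ℝ)
    (hfc : ContinuousOn f (Set.Ici s))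
    (hf1c : ContinuousOn f1 (Set.Ici s))
    (hd1 : ∀ t ∈ Set.Ici s, HasDerivWithinAt f (f1 t) (Set.Ici s) t)
    (hd2 : ∀ t ∈ Set.Ici s, HasDerivWithinAt f1 (f2 t) (Set.Ici s) t)
    (hfs : 0 < f s) (hf1s : 0 < f1 s)
    (hode : ∀ t ∈ Set.Ici s, lam ^ 2 * t ^ (-(2 * k)) * f t ≤ f2 t + μ * t⁻¹ * f1 t) :
    ∀ t ∈ Set.Ici s, 0 < f t := by
  have hspos : (0 : ℝ) < s := lt_of_lt_of_le one_pos hs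
  intro T hT
  by_contra hneg
  push_neg at hneg
  set Z : Set ℝ := {t | t ∈ Set.Icc s T ∧ f t ≤ 0} with hZdef
  have hZne : Z.Nonempty := ⟨T, ⟨hT, le_rfl⟩, hneg⟩
  have hZclosed : IsClosed Z := by
    have h1 : ContinuousOn f (Set.Icc s T) := hfc.mono (Set.Icc_subset_Ici_self)
    have := h1.preimage_isClosed_of_isClosed isClosed_Icc (isClosed_Iic (a := (0:ℝ)))
    convert this using 1
    rfl
  have hbdd : BddBelow Z := ⟨s, fun x hx => hx.1.1⟩
  set c := sInf Z with hcdef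
  have hcZ : c ∈ Z := hZclosed.csInf_mem hZne hbdd
  have hsc : s < c := by
    rcases lt_or_eq_of_le hcZ.1.1 with h | h
    · exact h
    · exact absurd (h ▸ hcZ.2) (not_le.2 hfs)
  have hcIci : ∀ u : ℝ, s ≤ u → u ≤ c → u ∈ Set.Ici s := fun u hu _ => hu
  have hfpos : ∀ u, s ≤ u → u < c → 0 < f u := by
    intro u hsu huc
    by_contra h
    push_neg at h
    have : u ∈ Z := ⟨⟨hsu, le_trans huc.le hcZ.1.2⟩, h⟩
    exact absurd (csInf_le hbdd this) (not_le.2 huc)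
  have hfc0 : 0 ≤ f c := by
    have hcl : c ∈ closure (Set.Ico s c) := by
      rw [closure_Ico hsc.ne]
      exact ⟨hsc.le, le_rfl⟩
    have h1 : ContinuousWithinAt f (Set.Ico s c) c :=
      (hfc.continuousWithinAt (le_trans hsc.le (le_refl c) : s ≤ c)).mono
        (fun x hx => hx.1)
    have hne : (nhdsWithin c (Set.Ico s c)).NeBot := mem_closure_iff_nhdsWithin_neBot.1 hcl
    exact ge_of_tendsto h1 (eventually_mem_nhdsWithin.mono fun u hu => (hfpos u hu.1 hu.2).le)
  have hfnn : ∀ u ∈ Set.Icc s c, 0 ≤ f u := by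
    rintro u ⟨h1, h2⟩
    rcases lt_or_eq_of_le h2 with h | h
    · exact (hfpos u h1 h).le
    · exact h ▸ hfc0
  -- v = t^μ * f1 t is monotone on [s, c]
  set v : ℝ → ℝ := fun t => t ^ μ * f1 t with hvdef
  have hvd : ∀ x ∈ Set.Ioo s c, HasDerivAt v (μ * x ^ (μ - 1) * f1 x + x ^ μ * f2 x) x := by
    intro x hx
    have hx0 : 0 < x := lt_of_lt_of_le hspos hx.1.le
    have hni : Set.Ici s ∈ nhds x := Ici_mem_nhds hx.1
    have h1 : HasDerivAt f1 (f2 x) x := (hd2 x hx.1.le).hasDerivAt hni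
    have h2 : HasDerivAt (fun t : ℝ => t ^ μ) (μ * x ^ (μ - 1)) x :=
      Real.hasDerivAt_rpow_const (Or.inl hx0.ne')
    exact h2.mul h1
  have hvderiv_nonneg : ∀ x ∈ Set.Ioo s c, 0 ≤ μ * x ^ (μ - 1) * f1 x + x ^ μ * f2 x := by
    intro x hx
    have hx0 : 0 < x := lt_of_lt_of_le hspos hx.1.le
    have h1 : 0 ≤ f2 x + μ * x⁻¹ * f1 x :=
      le_trans (mul_nonneg (mul_nonneg (sq_nonneg lam) (Real.rpow_nonneg hx0.le _))
        (hfnn x ⟨hx.1.le, hx.2.le⟩)) (hode x hx.1.le)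
    have h2 : 0 ≤ x ^ μ * (f2 x + μ * x⁻¹ * f1 x) :=
      mul_nonneg (Real.rpow_nonneg hx0.le μ) h1
    have h3 : μ * x ^ (μ - 1) * f1 x + x ^ μ * f2 x = x ^ μ * (f2 x + μ * x⁻¹ * f1 x) := by
      rw [Real.rpow_sub hx0, Real.rpow_one]
      field_simp
      ring
    linarith [h3 ▸ h2]
  have hvmono : MonotoneOn v (Set.Icc s c) := by
    apply monotoneOn_of_deriv_nonneg (convex_Icc s c)
    · apply ContinuousOn.mul
      · exact continuousOn_id.rpow_const fun x hx =>
          Or.inl (ne_of_gt (lt_of_lt_of_le hspos hx.1))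
      · exact hf1c.mono (fun x hx => le_trans hx.1 (le_refl x))
    · rw [interior_Icc]
      exact fun x hx => (hvd x hx).differentiableAt.differentiableWithinAt
    · rw [interior_Icc]
      intro x hx
      rw [(hvd x hx).deriv]
      exact hvderiv_nonneg x hx
  have hf1pos : ∀ u ∈ Set.Icc s c, 0 < f1 u := by
    intro u hu
    have hu0 : 0 < u := lt_of_lt_of_le hspos hu.1
    have hvs : 0 < v s := mul_pos (Real.rpow_pos_of_pos hspos μ) hf1s
    have hvu : v s ≤ v u := hvmono ⟨le_rfl, hsc.le⟩ hu hu.1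
    have : 0 < u ^ μ * f1 u := lt_of_lt_of_le hvs hvu
    by_contra h
    push_neg at h
    nlinarith [Real.rpow_pos_of_pos hu0 μ]
  have hmono : StrictMonoOn f (Set.Icc s c) := by
    apply strictMonoOn_of_deriv_pos (convex_Icc s c) (hfc.mono Set.Icc_subset_Ici_self)
    rw [interior_Icc]
    intro x hx
    have hd : HasDerivAt f (f1 x) x := (hd1 x hx.1.le).hasDerivAt (Ici_mem_nhds hx.1)
    rw [hd.deriv]
    exact hf1pos x ⟨hx.1.le, hx.2.le⟩
  have := hmono (Set.left_mem_Icc.2 hsc.le) (Set.right_mem_Icc.2 hsc.le) hsc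
  linarith [hcZ.2]

/-- Lower bound for the solution `y₁` of `y'' − λ² t^{−2k} y + μ t^{−1} y' = 0` with
`y₁(s) = 0`, `y₁'(s) = 1`, for `μ ≤ k` or `μ ≥ 2 − k`: with `φ_k(t) = t^{1−k}/(1−k)`,
`y₁(t) ≥ s^{(μ+k)/2} t^{(k−μ)/2} sinh(λ(φ_k(t) − φ_k(s)))/λ`. -/
theorem stmt10 (k μ lam s : ℝ) (hk0 : 0 ≤ k) (hk1 : k < 1) (hμ0 : 0 ≤ μ)
    (hμ : μ ≤ k ∨ 2 - k ≤ μ) (hlam : 0 < lam) (hs : 1 ≤ s)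
    (y₁ : ℝ → ℝ) (hy : ContDiffOn ℝ 2 y₁ (Set.Ici s))
    (h0 : y₁ s = 0) (h1 : derivWithin y₁ (Set.Ici s) s = 1)
    (hode : ∀ t : ℝ, s ≤ t →
      derivWithin (derivWithin y₁ (Set.Ici s)) (Set.Ici s) t
        - lam ^ 2 * t ^ (-(2 * k)) * y₁ t
        + μ * t⁻¹ * derivWithin y₁ (Set.Ici s) t = 0) :
    ∀ t : ℝ, s ≤ t →
      y₁ t ≥ s ^ ((μ + k) / 2) * t ^ ((k - μ) / 2)
        * Real.sinh (lam * (t ^ (1 - k) / (1 - k) - s ^ (1 - k) / (1 - k))) / lam := by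
  intro T hT
  have hspos : (0 : ℝ) < s := lt_of_lt_of_le one_pos hs
  have hlamne : lam ≠ 0 := hlam.ne'
  have hY1cd : ContDiffOn ℝ 1 (derivWithin y₁ (Set.Ici s)) (Set.Ici s) :=
    hy.derivWithin (uniqueDiffOn_Ici s) (by norm_num)
  have key : ∀ ε : ℝ, 0 < ε → 0 < y₁ T - GF k μ lam s T + ε * Real.exp (lam * T) := by
    intro ε hε
    set F : ℝ → ℝ := fun t => y₁ t - GF k μ lam s t + ε * Real.exp (lam * t) with hF
    set F1 : ℝ → ℝ := fun t => derivWithin y₁ (Set.Ici s) t - GF1 k μ lam s t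
      + ε * (Real.exp (lam * t) * lam) with hF1
    set F2 : ℝ → ℝ := fun t => derivWithin (derivWithin y₁ (Set.Ici s)) (Set.Ici s) t
      - GF2 k μ lam s t + ε * (Real.exp (lam * t) * lam * lam) with hF2
    have hGc : ContinuousOn (fun t => GF k μ lam s t) (Set.Ici s) := fun t ht =>
      ((hasDerivAt_GF k μ lam s hk1 hlamne (lt_of_lt_of_le hspos ht)).continuousAt).continuousWithinAt
    have hG1c : ContinuousOn (fun t => GF1 k μ lam s t) (Set.Ici s) := fun t ht =>
      ((hasDerivAt_GF1 k μ lam s hk1 hlamne (lt_of_lt_of_le hspos ht)).continuousAt).continuousWithinAt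
    have hec : Continuous fun t : ℝ => Real.exp (lam * t) :=
      Real.continuous_exp.comp (continuous_const.mul continuous_id)
    have hFc : ContinuousOn F (Set.Ici s) :=
      (hy.continuousOn.sub hGc).add ((continuous_const.mul hec).continuousOn)
    have hF1c : ContinuousOn F1 (Set.Ici s) :=
      (hY1cd.continuousOn.sub hG1c).add ((continuous_const.mul (hec.mul continuous_const)).continuousOn)
    have hd1 : ∀ t ∈ Set.Ici s, HasDerivWithinAt F (F1 t) (Set.Ici s) t := by
      intro t ht
      have ht0 : 0 < t := lt_of_lt_of_le hspos ht
      have hy' : HasDerivWithinAt y₁ (derivWithin y₁ (Set.Ici s) t) (Set.Ici s) t :=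
        (hy.differentiableOn (by norm_num) t ht).hasDerivWithinAt
      have hg' := (hasDerivAt_GF k μ lam s hk1 hlamne ht0).hasDerivWithinAt (s := Set.Ici s)
      have he' : HasDerivAt (fun u : ℝ => ε * Real.exp (lam * u))
          (ε * (Real.exp (lam * t) * lam)) t := by
        have h := (((hasDerivAt_id t).const_mul lam).exp).const_mul ε
        convert h using 1
        · rfl
        · rfl
        · rfl
        simp only [id_eq]
        ring
      exact (hy'.sub hg').add he'.hasDerivWithinAt
    have hd2 : ∀ t ∈ Set.Ici s, HasDerivWithinAt F1 (F2 t) (Set.Ici s) t := by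
      intro t ht
      have ht0 : 0 < t := lt_of_lt_of_le hspos ht
      have hy' : HasDerivWithinAt (derivWithin y₁ (Set.Ici s))
          (derivWithin (derivWithin y₁ (Set.Ici s)) (Set.Ici s) t) (Set.Ici s) t :=
        (hY1cd.differentiableOn one_ne_zero t ht).hasDerivWithinAt
      have hg' := (hasDerivAt_GF1 k μ lam s hk1 hlamne ht0).hasDerivWithinAt (s := Set.Ici s)
      have he' : HasDerivAt (fun u : ℝ => ε * (Real.exp (lam * u) * lam))
          (ε * (Real.exp (lam * t) * lam * lam)) t := by
        have h := ((((hasDerivAt_id t).const_mul lam).exp).mul_const lam).const_mul ε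
        convert h using 1
        · rfl
        · rfl
        · rfl
        simp only [id_eq]
        ring
      exact (hy'.sub hg').add he'.hasDerivWithinAt
    have hGs : GF k μ lam s s = 0 := by
      unfold GF; rw [sub_self, mul_zero, Real.sinh_zero]; ring
    have hG1s : GF1 k μ lam s s = 1 := by
      unfold GF1
      rw [sub_self, mul_zero, Real.sinh_zero, Real.cosh_zero, mul_zero, zero_add, mul_one,
        ← Real.rpow_add hspos, show (μ + k) / 2 + ((k - μ) / 2 - k) = (0:ℝ) by ring,
        Real.rpow_zero]
    have hFs : 0 < F s := by
      rw [hF]; simp only [h0, hGs]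
      have := Real.exp_pos (lam * s)
      nlinarith
    have hF1s : 0 < F1 s := by
      rw [hF1]; simp only [h1, hG1s]
      nlinarith [mul_pos hε (mul_pos (Real.exp_pos (lam * s)) hlam)]
    have hodeF : ∀ t ∈ Set.Ici s, lam ^ 2 * t ^ (-(2 * k)) * F t ≤ F2 t + μ * t⁻¹ * F1 t := by
      intro t ht
      have ht0 : 0 < t := lt_of_lt_of_le hspos ht
      have h0' := hode t ht
      have hg := GF_ode k μ lam s hk0 hk1 hμ0 hμ hlam hs ht
      have hK1 : t ^ (-(2 * k)) ≤ 1 :=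
        Real.rpow_le_one_of_one_le_of_nonpos (le_trans hs ht) (by linarith)
      have hepos : 0 < Real.exp (lam * t) := Real.exp_pos _
      have htinv : (0:ℝ) ≤ t⁻¹ := inv_nonneg.2 ht0.le
      have hexp3 : 0 ≤ ε * (Real.exp (lam * t) * lam * lam)
          + μ * t⁻¹ * (ε * (Real.exp (lam * t) * lam))
          - lam ^ 2 * t ^ (-(2 * k)) * (ε * Real.exp (lam * t)) := by
        nlinarith [mul_nonneg (mul_nonneg (mul_nonneg hμ0 htinv) hε.le)
            (mul_pos hepos hlam).le,
          mul_nonneg (mul_nonneg (mul_pos hε hepos).le (sq_nonneg lam))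
            (sub_nonneg.2 hK1)]
      have hsplit : F2 t + μ * t⁻¹ * F1 t - lam ^ 2 * t ^ (-(2 * k)) * F t
          = (derivWithin (derivWithin y₁ (Set.Ici s)) (Set.Ici s) t
              - lam ^ 2 * t ^ (-(2 * k)) * y₁ t + μ * t⁻¹ * derivWithin y₁ (Set.Ici s) t)
            - (GF2 k μ lam s t + μ * t⁻¹ * GF1 k μ lam s t
              - lam ^ 2 * t ^ (-(2 * k)) * GF k μ lam s t)
            + (ε * (Real.exp (lam * t) * lam * lam)
              + μ * t⁻¹ * (ε * (Real.exp (lam * t) * lam))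
              - lam ^ 2 * t ^ (-(2 * k)) * (ε * Real.exp (lam * t))) := by
        rw [hF, hF1, hF2]; ring
      linarith
    exact ode_comp hs hμ0 F F1 F2 hFc hF1c hd1 hd2 hFs hF1s hodeF T hT
  suffices h : GF k μ lam s T ≤ y₁ T by exact h
  by_contra hcon
  push_neg at hcon
  have hE : 0 < Real.exp (lam * T) := Real.exp_pos _
  have hεpos : 0 < (GF k μ lam s T - y₁ T) / (2 * Real.exp (lam * T)) := by
    apply div_pos (by linarith) (by positivity)
  have h2 := key _ hεpos
  have h3 : (GF k μ lam s T - y₁ T) / (2 * Real.exp (lam * T)) * Real.exp (lam * T)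
      = (GF k μ lam s T - y₁ T) / 2 := by
    field_simp
  rw [h3] at h2
  linarith
end

section
/- Let k ∈ [0,1), μ ≥ 0, λ > 0, and s > 0. Define w₁(t) := λ^{−1} s^{(k+μ)/2} t^{(k−μ)/2} sinh(λ(φ_k(t) − φ_k(s))) for t > 0. Then for all t > 0 one has w₁''(t) − λ² t^{−2k} w₁(t) + μ t^{−1} w₁'(t) = ((k−μ)/2)·((k+μ)/2 − 1)·t^{−2} w₁(t). -/
open Real

/-- Derivative of the inner phase `lam * (τ^(1-k)/(1-k) - c)`. -/
lemma aux_hasDerivAt_phase (lam c k : ℝ) (hk : k ≠ 1) {t : ℝ} (ht : 0 < t) :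
    HasDerivAt (fun τ : ℝ => lam * (τ ^ (1 - k) / (1 - k) - c)) (lam * t ^ (-k)) t := by
  have h : HasDerivAt (fun τ : ℝ => τ ^ (1 - k)) ((1 - k) * t ^ (1 - k - 1)) t :=
    Real.hasDerivAt_rpow_const (Or.inl ht.ne')
  have h2 := ((h.div_const (1 - k)).sub_const c).const_mul lam
  convert h2 using 1
  · rfl
  · rfl
  have hk' : (1 : ℝ) - k ≠ 0 := sub_ne_zero.mpr (Ne.symm hk)
  rw [show (1 : ℝ) - k - 1 = -k by ring]
  field_simp

lemma aux_hasDerivAt_sinh (C lam c k a : ℝ) (hk : k ≠ 1) {t : ℝ} (ht : 0 < t) :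
    HasDerivAt (fun τ : ℝ => C * τ ^ a * Real.sinh (lam * (τ ^ (1 - k) / (1 - k) - c)))
      (C * (a * t ^ (a - 1)) * Real.sinh (lam * (t ^ (1 - k) / (1 - k) - c))
        + C * t ^ a * (Real.cosh (lam * (t ^ (1 - k) / (1 - k) - c)) * (lam * t ^ (-k)))) t := by
  have h1 : HasDerivAt (fun τ : ℝ => C * τ ^ a) (C * (a * t ^ (a - 1))) t :=
    (Real.hasDerivAt_rpow_const (Or.inl ht.ne')).const_mul C
  have hu := aux_hasDerivAt_phase lam c k hk ht
  have h2 : HasDerivAt (fun τ : ℝ => Real.sinh (lam * (τ ^ (1 - k) / (1 - k) - c)))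
      (Real.cosh (lam * (t ^ (1 - k) / (1 - k) - c)) * (lam * t ^ (-k))) t :=
    (Real.hasDerivAt_sinh _).comp t hu
  exact h1.mul h2

lemma aux_hasDerivAt_cosh (C lam c k a : ℝ) (hk : k ≠ 1) {t : ℝ} (ht : 0 < t) :
    HasDerivAt (fun τ : ℝ => C * τ ^ a * Real.cosh (lam * (τ ^ (1 - k) / (1 - k) - c)))
      (C * (a * t ^ (a - 1)) * Real.cosh (lam * (t ^ (1 - k) / (1 - k) - c))
        + C * t ^ a * (Real.sinh (lam * (t ^ (1 - k) / (1 - k) - c)) * (lam * t ^ (-k)))) t := by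
  have h1 : HasDerivAt (fun τ : ℝ => C * τ ^ a) (C * (a * t ^ (a - 1))) t :=
    (Real.hasDerivAt_rpow_const (Or.inl ht.ne')).const_mul C
  have hu := aux_hasDerivAt_phase lam c k hk ht
  have h2 : HasDerivAt (fun τ : ℝ => Real.cosh (lam * (τ ^ (1 - k) / (1 - k) - c)))
      (Real.sinh (lam * (t ^ (1 - k) / (1 - k) - c)) * (lam * t ^ (-k))) t :=
    (Real.hasDerivAt_cosh _).comp t hu
  exact h1.mul h2

/-- The explicit function `w₁(t) = λ^{−1} s^{(k+μ)/2} t^{(k−μ)/2} sinh(λ(φ_k(t) − φ_k(s)))`,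
with `φ_k(t) = t^{1−k}/(1−k)`, satisfies
`w₁'' − λ² t^{−2k} w₁ + μ t^{−1} w₁' = ((k−μ)/2)((k+μ)/2 − 1) t^{−2} w₁` for `t > 0`. -/
theorem stmt11 (k μ lam s : ℝ) (hk0 : 0 ≤ k) (hk1 : k < 1) (hμ : 0 ≤ μ)
    (hlam : 0 < lam) (hs : 0 < s) :
    ∀ t : ℝ, 0 < t →
      deriv (deriv (fun τ : ℝ => lam⁻¹ * s ^ ((k + μ) / 2) * τ ^ ((k - μ) / 2)
          * Real.sinh (lam * (τ ^ (1 - k) / (1 - k) - s ^ (1 - k) / (1 - k))))) t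
        - lam ^ 2 * t ^ (-(2 * k)) * (lam⁻¹ * s ^ ((k + μ) / 2) * t ^ ((k - μ) / 2)
          * Real.sinh (lam * (t ^ (1 - k) / (1 - k) - s ^ (1 - k) / (1 - k))))
        + μ * t⁻¹ * deriv (fun τ : ℝ => lam⁻¹ * s ^ ((k + μ) / 2) * τ ^ ((k - μ) / 2)
          * Real.sinh (lam * (τ ^ (1 - k) / (1 - k) - s ^ (1 - k) / (1 - k)))) t
        = (k - μ) / 2 * ((k + μ) / 2 - 1) / t ^ 2
          * (lam⁻¹ * s ^ ((k + μ) / 2) * t ^ ((k - μ) / 2)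
            * Real.sinh (lam * (t ^ (1 - k) / (1 - k) - s ^ (1 - k) / (1 - k)))) := by
  intro t ht
  have hk : k ≠ 1 := ne_of_lt hk1
  set C : ℝ := lam⁻¹ * s ^ ((k + μ) / 2) with hC
  set a : ℝ := (k - μ) / 2 with ha
  set c : ℝ := s ^ (1 - k) / (1 - k) with hc
  -- the first derivative on Ioi 0
  have hderiv : ∀ τ : ℝ, 0 < τ →
      deriv (fun τ : ℝ => C * τ ^ a * Real.sinh (lam * (τ ^ (1 - k) / (1 - k) - c))) τ
      = (C * a) * τ ^ (a - 1) * Real.sinh (lam * (τ ^ (1 - k) / (1 - k) - c))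
        + (C * lam) * τ ^ (a + -k) * Real.cosh (lam * (τ ^ (1 - k) / (1 - k) - c)) := by
    intro τ hτ
    rw [(aux_hasDerivAt_sinh C lam c k a hk hτ).deriv]
    rw [Real.rpow_add hτ]
    ring
  -- second derivative
  have hEq : deriv (deriv (fun τ : ℝ => C * τ ^ a
        * Real.sinh (lam * (τ ^ (1 - k) / (1 - k) - c)))) t
      = deriv (fun τ : ℝ =>
          (C * a) * τ ^ (a - 1) * Real.sinh (lam * (τ ^ (1 - k) / (1 - k) - c))
          + (C * lam) * τ ^ (a + -k) * Real.cosh (lam * (τ ^ (1 - k) / (1 - k) - c))) t := by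
    apply Filter.EventuallyEq.deriv_eq
    filter_upwards [IsOpen.mem_nhds isOpen_Ioi ht] with τ hτ
    exact hderiv τ hτ
  have hd2 : HasDerivAt (fun τ : ℝ =>
      (C * a) * τ ^ (a - 1) * Real.sinh (lam * (τ ^ (1 - k) / (1 - k) - c))
      + (C * lam) * τ ^ (a + -k) * Real.cosh (lam * (τ ^ (1 - k) / (1 - k) - c)))
      (((C * a) * ((a - 1) * t ^ (a - 1 - 1)) * Real.sinh (lam * (t ^ (1 - k) / (1 - k) - c))
        + (C * a) * t ^ (a - 1)
          * (Real.cosh (lam * (t ^ (1 - k) / (1 - k) - c)) * (lam * t ^ (-k))))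
       + ((C * lam) * ((a + -k) * t ^ (a + -k - 1))
            * Real.cosh (lam * (t ^ (1 - k) / (1 - k) - c))
        + (C * lam) * t ^ (a + -k)
          * (Real.sinh (lam * (t ^ (1 - k) / (1 - k) - c)) * (lam * t ^ (-k))))) t :=
    (aux_hasDerivAt_sinh (C * a) lam c k (a - 1) hk ht).add
      (aux_hasDerivAt_cosh (C * lam) lam c k (a + -k) hk ht)
  rw [hEq, hd2.deriv, hderiv t ht]
  -- now pure algebra in rpow
  have ht0 : t ≠ 0 := ht.ne'
  have e1 : t ^ (a - 1 - 1) = t ^ a * t⁻¹ * t⁻¹ := by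
    rw [show a - 1 - 1 = a + (-1) + (-1) by ring, Real.rpow_add ht, Real.rpow_add ht,
      Real.rpow_neg_one]
  have e2 : t ^ (a - 1) = t ^ a * t⁻¹ := by
    rw [show a - 1 = a + (-1) by ring, Real.rpow_add ht, Real.rpow_neg_one]
  have e3 : t ^ (a + -k - 1) = t ^ a * t ^ (-k) * t⁻¹ := by
    rw [show a + -k - 1 = a + (-k) + (-1) by ring, Real.rpow_add ht, Real.rpow_add ht,
      Real.rpow_neg_one]
  have e4 : t ^ (a + -k) = t ^ a * t ^ (-k) := Real.rpow_add ht a (-k)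
  have e5 : t ^ (-(2 * k)) = t ^ (-k) * t ^ (-k) := by
    rw [← Real.rpow_add ht]; ring_nf
  rw [e1, e2, e3, e4, e5]
  have ha' : a = (k - μ) / 2 := ha
  field_simp
  ring
end

section
/- Let n ≥ 1 be an integer, k ∈ [0,1), and μ ≥ 0, and assume (n−1)/2 + (μ−k)/(2(1−k)) > 0. Let p₀ > 0 be the (unique) positive real number satisfying ((n−1)/2 + (μ−k)/(2(1−k)))p₀² − ((n+1)/2 + (μ+3k)/(2(1−k)))p₀ − 1 = 0, and set p₁ = 1 + 2/((1−k)n). Then p₁ > p₀ if and only if μ > μ₀(k,n), where μ₀(k,n) = ((1−k)²n² + (1−k)(1+2k)n + 2)/(n(1−k)+2). -/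
/-- `p₁(k,n) > p₀(k, n + μ/(1−k))` if and only if `μ > μ₀(k,n)`, where `p₀` is the positive
root of the shifted quadratic and `μ₀(k,n) = ((1−k)²n² + (1−k)(1+2k)n + 2)/(n(1−k)+2)`. -/
theorem stmt13 (n : ℕ) (hn : 1 ≤ n) (k μ : ℝ)
    (hk0 : 0 ≤ k) (hk1 : k < 1) (hμ : 0 ≤ μ)
    (hA : ((n : ℝ) - 1) / 2 + (μ - k) / (2 * (1 - k)) > 0)
    (p₀ : ℝ) (hp₀pos : 0 < p₀)
    (hroot : (((n : ℝ) - 1) / 2 + (μ - k) / (2 * (1 - k))) * p₀ ^ 2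
        - (((n : ℝ) + 1) / 2 + (μ + 3 * k) / (2 * (1 - k))) * p₀ - 1 = 0) :
    1 + 2 / ((1 - k) * (n : ℝ)) > p₀ ↔
      μ > ((1 - k) ^ 2 * (n : ℝ) ^ 2 + (1 - k) * (1 + 2 * k) * (n : ℝ) + 2)
          / ((n : ℝ) * (1 - k) + 2) := by
  have ht : (0:ℝ) < 1 - k := by linarith
  have hN : (1:ℝ) ≤ n := by exact_mod_cast hn
  have hN0 : (0:ℝ) < n := by linarith
  set A : ℝ := ((n : ℝ) - 1) / 2 + (μ - k) / (2 * (1 - k)) with hAdef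
  set B : ℝ := ((n : ℝ) + 1) / 2 + (μ + 3 * k) / (2 * (1 - k)) with hBdef
  set x : ℝ := 1 + 2 / ((1 - k) * (n : ℝ)) with hxdef
  clear_value A B x
  have hx1 : 1 < x := by
    have : 0 < 2 / ((1 - k) * (n : ℝ)) := by positivity
    rw [hxdef]; linarith
  have hx0 : 0 < x := by linarith
  -- key factorization
  have key : (A * x ^ 2 - B * x - 1) * p₀ = (x - p₀) * (A * x * p₀ + 1) := by
    linear_combination x * hroot
  have hfac_pos : 0 < A * x * p₀ + 1 := by positivity
  -- x > p₀ ↔ f(x) > 0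
  have step1 : x > p₀ ↔ 0 < A * x ^ 2 - B * x - 1 := by
    constructor
    · intro h
      have : 0 < (A * x ^ 2 - B * x - 1) * p₀ := by
        rw [key]; exact mul_pos (by linarith) hfac_pos
      nlinarith [this, hp₀pos]
    · intro h
      nlinarith [key, hfac_pos, mul_pos h hp₀pos]
  -- f(x) = (x^2 - x)/(2(1-k)) * (μ - μ₀)
  have hD : (0:ℝ) < (n : ℝ) * (1 - k) + 2 := by positivity
  have h2 : A * x ^ 2 - B * x - 1 =
      (x ^ 2 - x) / (2 * (1 - k)) *
        (μ - ((1 - k) ^ 2 * (n : ℝ) ^ 2 + (1 - k) * (1 + 2 * k) * (n : ℝ) + 2)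
          / ((n : ℝ) * (1 - k) + 2)) := by
    rw [hAdef, hBdef, hxdef]
    field_simp
    ring
  have hcoef : 0 < (x ^ 2 - x) / (2 * (1 - k)) := by
    apply div_pos; nlinarith; linarith
  rw [step1, h2]
  constructor
  · intro h
    rcases mul_pos_iff.mp h with ⟨_, h4⟩ | ⟨h3, _⟩
    · linarith
    · linarith
  · intro h
    exact mul_pos hcoef (by linarith)
end

section
/- Let n ≥ 1 be an integer, k ∈ [0,1), μ ≥ 0, p > 1, C > 0, T₁ ≥ 1, D > 0, a ≥ 0, b ≥ 0. Let U₀ : [1,∞) → ℝ be continuous and nonnegative, and assume that (i) U₀(t) ≥ C ∫₁ᵗ τ^{−μ} ( ∫₁^τ s^{μ−(1−k)n(p−1)} U₀(s)^p ds ) dτ for all t ≥ 1, and (ii) U₀(s) ≥ D s^{−a}(s−T₁)^{b} for all s ≥ T₁. Then for all t ≥ T₁ one has U₀(t) ≥ (C D^p / ((1+μ+bp)(2+μ+bp))) · t^{−(1−k)n(p−1)−μ−ap} · (t−T₁)^{2+μ+bp}. -/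
/-- Inductive step of the iteration argument in the subcritical case: from a lower bound
`D s^{−a}(s−T₁)^b` the integral inequality produces a new lower bound with parameters
`a' = (1−k)n(p−1) + μ + ap` and `b' = 2 + μ + bp`. -/
theorem stmt16 (n : ℕ) (hn : 1 ≤ n) (k μ p C T₁ D a b : ℝ)
    (hk0 : 0 ≤ k) (hk1 : k < 1) (hμ : 0 ≤ μ) (hp : 1 < p) (hC : 0 < C)
    (hT₁ : 1 ≤ T₁) (hD : 0 < D) (ha : 0 ≤ a) (hb : 0 ≤ b)
    (U₀ : ℝ → ℝ) (hcont : ContinuousOn U₀ (Set.Ici 1))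
    (hnonneg : ∀ s : ℝ, 1 ≤ s → 0 ≤ U₀ s)
    (hframe : ∀ t : ℝ, 1 ≤ t → U₀ t ≥
      C * ∫ τ in (1 : ℝ)..t, τ ^ (-μ) *
        ∫ s in (1 : ℝ)..τ, s ^ (μ - (1 - k) * (n : ℝ) * (p - 1)) * U₀ s ^ p)
    (hlb : ∀ s : ℝ, T₁ ≤ s → U₀ s ≥ D * s ^ (-a) * (s - T₁) ^ b) :
    ∀ t : ℝ, T₁ ≤ t → U₀ t ≥
      (C * D ^ p / ((1 + μ + b * p) * (2 + μ + b * p)))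
        * t ^ (-((1 - k) * (n : ℝ) * (p - 1)) - μ - a * p)
        * (t - T₁) ^ (2 + μ + b * p) := by
  intro t ht
  set α : ℝ := (1 - k) * (n : ℝ) * (p - 1) with hαdef
  have ht1 : (1:ℝ) ≤ t := hT₁.trans ht
  have hp0 : (0:ℝ) < p := lt_trans one_pos hp
  have hα0 : 0 ≤ α := by
    have : (0:ℝ) ≤ (n:ℝ) := Nat.cast_nonneg n
    apply mul_nonneg (mul_nonneg (by linarith) this) (by linarith)
  have hbp : 0 ≤ b * p := mul_nonneg hb hp0.le
  have hE1 : (0:ℝ) < 1 + μ + b * p := by linarith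
  have hE2 : (0:ℝ) < 2 + μ + b * p := by linarith
  set f : ℝ → ℝ := fun s => s ^ (μ - α) * U₀ s ^ p with hfdef
  have hfcont : ContinuousOn f (Set.Ici (1:ℝ)) := by
    apply ContinuousOn.mul
    · exact continuousOn_id.rpow_const fun x hx =>
        Or.inl (ne_of_gt (lt_of_lt_of_le one_pos hx))
    · exact hcont.rpow_const fun x _ => Or.inr hp0.le
  have hfnn : ∀ s : ℝ, 1 ≤ s → 0 ≤ f s := fun s hs =>
    mul_nonneg (Real.rpow_nonneg (by linarith) _) (Real.rpow_nonneg (hnonneg s hs) _)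
  have hfint : ∀ x y : ℝ, 1 ≤ x → 1 ≤ y → IntervalIntegrable f MeasureTheory.volume x y :=
    fun x y hx hy => (hfcont.mono fun z hz => le_trans (le_min hx hy) hz.1).intervalIntegrable
  -- key inner bound
  have key : ∀ τ : ℝ, τ ∈ Set.Icc T₁ t →
      D ^ p * τ ^ (-(α + a * p)) * ((τ - T₁) ^ (1 + μ + b * p) / (1 + μ + b * p))
        ≤ ∫ s in (1:ℝ)..τ, f s := by
    intro τ hτ
    have hτ1 : (1:ℝ) ≤ τ := hT₁.trans hτ.1
    have hsplit : (∫ s in (1:ℝ)..τ, f s)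
        = (∫ s in (1:ℝ)..T₁, f s) + ∫ s in T₁..τ, f s :=
      (intervalIntegral.integral_add_adjacent_intervals (hfint 1 T₁ le_rfl hT₁)
        (hfint T₁ τ hT₁ hτ1)).symm
    have h1 : 0 ≤ ∫ s in (1:ℝ)..T₁, f s :=
      intervalIntegral.integral_nonneg hT₁ fun s hs => hfnn s hs.1
    set g : ℝ → ℝ := fun s => D ^ p * τ ^ (-(α + a * p)) * (s - T₁) ^ (μ + b * p) with hgdef
    have hgcont : Continuous g := by
      apply Continuous.mul continuous_const
      exact (continuous_id.sub continuous_const).rpow_const fun x => Or.inr (by linarith)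
    have hmono : ∀ s ∈ Set.Icc T₁ τ, g s ≤ f s := by
      intro s hs
      have hs1 : (1:ℝ) ≤ s := hT₁.trans hs.1
      have hsp : (0:ℝ) < s := lt_of_lt_of_le one_pos hs1
      have hsT : (0:ℝ) ≤ s - T₁ := by linarith [hs.1]
      have h2 : (D * s ^ (-a) * (s - T₁) ^ b) ^ p ≤ U₀ s ^ p :=
        Real.rpow_le_rpow (by positivity) (hlb s hs.1) hp0.le
      have h3 : (D * s ^ (-a) * (s - T₁) ^ b) ^ p
          = D ^ p * s ^ (-a * p) * (s - T₁) ^ (b * p) := by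
        rw [Real.mul_rpow (by positivity) (Real.rpow_nonneg hsT b),
          Real.mul_rpow hD.le (Real.rpow_nonneg hsp.le _),
          ← Real.rpow_mul hsp.le, ← Real.rpow_mul hsT]
      have h4 : D ^ p * s ^ (-a * p) * (s - T₁) ^ (b * p) ≤ U₀ s ^ p := h3 ▸ h2
      have h5 : g s ≤ s ^ (μ - α) * (D ^ p * s ^ (-a * p) * (s - T₁) ^ (b * p)) := by
        have e0 : s ^ (μ - α) * s ^ (-a * p) = s ^ (-(α + a * p)) * s ^ μ := by
          rw [← Real.rpow_add hsp, ← Real.rpow_add hsp]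
          congr 1
          ring
        have e1 : s ^ (μ - α) * (D ^ p * s ^ (-a * p) * (s - T₁) ^ (b * p))
            = D ^ p * (s ^ (-(α + a * p)) * s ^ μ) * (s - T₁) ^ (b * p) := by
          linear_combination (D ^ p * (s - T₁) ^ (b * p)) * e0
        have e2 : g s = D ^ p * (τ ^ (-(α + a * p)) * (s - T₁) ^ μ) * (s - T₁) ^ (b * p) := by
          rw [hgdef]
          simp only
          rw [Real.rpow_add_of_nonneg hsT hμ hbp]
          ring
        rw [e1, e2]
        have A : τ ^ (-(α + a * p)) ≤ s ^ (-(α + a * p)) :=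
          Real.rpow_le_rpow_of_nonpos hsp hs.2 (by linarith [mul_nonneg ha hp0.le])
        have B : (s - T₁) ^ μ ≤ s ^ μ := Real.rpow_le_rpow hsT (by linarith) hμ
        have hC2 : 0 ≤ s ^ (-(α + a * p)) := Real.rpow_nonneg hsp.le _
        have hC3 : 0 ≤ (s - T₁) ^ μ := Real.rpow_nonneg hsT _
        have AB : τ ^ (-(α + a * p)) * (s - T₁) ^ μ ≤ s ^ (-(α + a * p)) * s ^ μ :=
          mul_le_mul A B hC3 hC2
        exact mul_le_mul_of_nonneg_right
          (mul_le_mul_of_nonneg_left AB (by positivity)) (Real.rpow_nonneg hsT _)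
      calc g s ≤ s ^ (μ - α) * (D ^ p * s ^ (-a * p) * (s - T₁) ^ (b * p)) := h5
        _ ≤ s ^ (μ - α) * U₀ s ^ p :=
            mul_le_mul_of_nonneg_left h4 (Real.rpow_nonneg hsp.le _)
        _ = f s := rfl
    have h6 : (∫ s in T₁..τ, g s) ≤ ∫ s in T₁..τ, f s :=
      intervalIntegral.integral_mono_on hτ.1 (hgcont.intervalIntegrable _ _)
        (hfint T₁ τ hT₁ hτ1) hmono
    have h7 : (∫ s in T₁..τ, g s)
        = D ^ p * τ ^ (-(α + a * p)) * ((τ - T₁) ^ (1 + μ + b * p) / (1 + μ + b * p)) := by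
      rw [hgdef]
      simp only
      rw [intervalIntegral.integral_const_mul]
      congr 1
      have := intervalIntegral.integral_comp_sub_right (fun x => x ^ (μ + b * p)) T₁
        (a := T₁) (b := τ)
      rw [this, sub_self, integral_rpow (Or.inl (by linarith)),
        Real.zero_rpow (by positivity), sub_zero]
      rw [show μ + b * p + 1 = 1 + μ + b * p by ring]
    rw [hsplit, ← h7]
    linarith [h1, h6]
  -- outer step
  have hFc : ContinuousOn (fun τ => ∫ s in (1:ℝ)..τ, f s) (Set.uIcc 1 t) :=
    intervalIntegral.continuousOn_primitive_interval' (hfint 1 t le_rfl ht1) Set.left_mem_uIcc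
  have huIcc : Set.uIcc (1:ℝ) t = Set.Icc 1 t := Set.uIcc_of_le ht1
  have hhcont : ContinuousOn (fun τ => τ ^ (-μ) * ∫ s in (1:ℝ)..τ, f s) (Set.Icc 1 t) := by
    apply ContinuousOn.mul
    · exact continuousOn_id.rpow_const fun x hx =>
        Or.inl (ne_of_gt (lt_of_lt_of_le one_pos hx.1))
    · exact hFc.mono (by rw [huIcc])
  have hhint : IntervalIntegrable (fun τ => τ ^ (-μ) * ∫ s in (1:ℝ)..τ, f s)
      MeasureTheory.volume 1 t := (hhcont.mono (by rw [Set.uIcc_of_le ht1])).intervalIntegrable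
  have hhint1 : IntervalIntegrable (fun τ => τ ^ (-μ) * ∫ s in (1:ℝ)..τ, f s)
      MeasureTheory.volume 1 T₁ := hhint.mono_set (by
        rw [Set.uIcc_of_le ht1, Set.uIcc_of_le hT₁]
        exact Set.Icc_subset_Icc le_rfl ht)
  have hhint2 : IntervalIntegrable (fun τ => τ ^ (-μ) * ∫ s in (1:ℝ)..τ, f s)
      MeasureTheory.volume T₁ t := hhint.mono_set (by
        rw [Set.uIcc_of_le ht1, Set.uIcc_of_le ht]
        exact Set.Icc_subset_Icc hT₁ le_rfl)
  have hsplit2 : (∫ τ in (1:ℝ)..t, τ ^ (-μ) * ∫ s in (1:ℝ)..τ, f s)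
      = (∫ τ in (1:ℝ)..T₁, τ ^ (-μ) * ∫ s in (1:ℝ)..τ, f s)
        + ∫ τ in T₁..t, τ ^ (-μ) * ∫ s in (1:ℝ)..τ, f s :=
    (intervalIntegral.integral_add_adjacent_intervals hhint1 hhint2).symm
  have hpos1 : 0 ≤ ∫ τ in (1:ℝ)..T₁, τ ^ (-μ) * ∫ s in (1:ℝ)..τ, f s := by
    apply intervalIntegral.integral_nonneg hT₁
    intro u hu
    apply mul_nonneg (Real.rpow_nonneg (by linarith [hu.1]) _)
    exact intervalIntegral.integral_nonneg hu.1 fun s hs => hfnn s hs.1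
  set G : ℝ → ℝ := fun τ =>
    D ^ p / (1 + μ + b * p) * t ^ (-(α + a * p) - μ) * (τ - T₁) ^ (1 + μ + b * p) with hGdef
  have hGcont : Continuous G := by
    apply Continuous.mul continuous_const
    exact (continuous_id.sub continuous_const).rpow_const fun x => Or.inr (by linarith)
  have hGmono : ∀ τ ∈ Set.Icc T₁ t, G τ ≤ τ ^ (-μ) * ∫ s in (1:ℝ)..τ, f s := by
    intro τ hτ
    have hτ1 : (1:ℝ) ≤ τ := hT₁.trans hτ.1
    have hτp : (0:ℝ) < τ := lt_of_lt_of_le one_pos hτ1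
    have hτT : (0:ℝ) ≤ τ - T₁ := by linarith [hτ.1]
    have h8 : τ ^ (-μ) * (D ^ p * τ ^ (-(α + a * p)) * ((τ - T₁) ^ (1 + μ + b * p) / (1 + μ + b * p)))
        ≤ τ ^ (-μ) * ∫ s in (1:ℝ)..τ, f s :=
      mul_le_mul_of_nonneg_left (key τ hτ) (Real.rpow_nonneg hτp.le _)
    refine le_trans ?_ h8
    have e3 : τ ^ (-μ) * (D ^ p * τ ^ (-(α + a * p)) * ((τ - T₁) ^ (1 + μ + b * p) / (1 + μ + b * p)))
        = D ^ p / (1 + μ + b * p) * τ ^ (-(α + a * p) - μ) * (τ - T₁) ^ (1 + μ + b * p) := by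
      rw [show -(α + a * p) - μ = -μ + -(α + a * p) by ring, Real.rpow_add hτp]
      ring
    rw [hGdef]
    simp only
    rw [e3]
    have A : t ^ (-(α + a * p) - μ) ≤ τ ^ (-(α + a * p) - μ) :=
      Real.rpow_le_rpow_of_nonpos hτp hτ.2 (by nlinarith [mul_nonneg ha hp0.le])
    exact mul_le_mul_of_nonneg_right
      (mul_le_mul_of_nonneg_left A (div_nonneg (Real.rpow_nonneg hD.le _) hE1.le))
      (Real.rpow_nonneg hτT _)
  have h9 : (∫ τ in T₁..t, G τ) ≤ ∫ τ in T₁..t, τ ^ (-μ) * ∫ s in (1:ℝ)..τ, f s :=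
    intervalIntegral.integral_mono_on ht (hGcont.intervalIntegrable _ _) hhint2 hGmono
  have h10 : (∫ τ in T₁..t, G τ)
      = D ^ p / (1 + μ + b * p) * t ^ (-(α + a * p) - μ)
        * ((t - T₁) ^ (2 + μ + b * p) / (2 + μ + b * p)) := by
    rw [hGdef]
    simp only
    rw [intervalIntegral.integral_const_mul]
    congr 1
    have := intervalIntegral.integral_comp_sub_right (fun x => x ^ (1 + μ + b * p)) T₁
      (a := T₁) (b := t)
    rw [this, sub_self, integral_rpow (Or.inl (by linarith)),
      Real.zero_rpow (by positivity), sub_zero]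
    rw [show 1 + μ + b * p + 1 = 2 + μ + b * p by ring]
  have hmain := hframe t ht1
  have hfinal : C * ∫ τ in (1:ℝ)..t, τ ^ (-μ) * ∫ s in (1:ℝ)..τ, f s
      ≥ C * (D ^ p / (1 + μ + b * p) * t ^ (-(α + a * p) - μ)
        * ((t - T₁) ^ (2 + μ + b * p) / (2 + μ + b * p))) := by
    apply mul_le_mul_of_nonneg_left _ hC.le
    rw [hsplit2, ← h10]
    linarith [h9, hpos1]
  have hexp : -(α + a * p) - μ = -α - μ - a * p := by ring
  have hfinal2 : U₀ t ≥ C * (D ^ p / (1 + μ + b * p) * t ^ (-α - μ - a * p)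
      * ((t - T₁) ^ (2 + μ + b * p) / (2 + μ + b * p))) := by
    rw [← hexp]
    exact le_trans hfinal hmain
  have : C * (D ^ p / (1 + μ + b * p) * t ^ (-α - μ - a * p)
      * ((t - T₁) ^ (2 + μ + b * p) / (2 + μ + b * p)))
      = C * D ^ p / ((1 + μ + b * p) * (2 + μ + b * p)) * t ^ (-α - μ - a * p)
        * (t - T₁) ^ (2 + μ + b * p) := by
    field_simp
  linarith [this ▸ hfinal2]
end

section
/- Let μ ≥ 0, p > 1, C > 0, K > 0, σ > 0, and let 1 ≤ ℓ < ℓ'. Let U₀ : [1,∞) → ℝ be continuous and nonnegative, and assume that (i) U₀(t) ≥ C ∫₁ᵗ τ^{−μ} ( ∫₁^τ s^{μ−2} U₀(s)^p ds ) dτ for all t ≥ 1, and (ii) U₀(s) ≥ K (log(s/ℓ))^σ for all s ≥ ℓ. Then for all t ≥ ℓ' one has U₀(t) ≥ (C K^p / ((μ+1)(1+pσ))) · (1 − ℓ/ℓ')^{μ+1} · (log(t/ℓ'))^{pσ+1}. -/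
open MeasureTheory Set intervalIntegral

/-- Inductive step of the slicing iteration argument for the critical case `p = p₁(k,n)`. -/
theorem stmt18 (μ p C K σ ℓ ℓ' : ℝ)
    (hμ : 0 ≤ μ) (hp : 1 < p) (hC : 0 < C) (hK : 0 < K) (hσ : 0 < σ)
    (hℓ : 1 ≤ ℓ) (hℓℓ' : ℓ < ℓ')
    (U₀ : ℝ → ℝ) (hcont : ContinuousOn U₀ (Set.Ici 1))
    (hnonneg : ∀ s : ℝ, 1 ≤ s → 0 ≤ U₀ s)
    (hframe : ∀ t : ℝ, 1 ≤ t → U₀ t ≥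
      C * ∫ τ in (1 : ℝ)..t, τ ^ (-μ) * ∫ s in (1 : ℝ)..τ, s ^ (μ - 2) * U₀ s ^ p)
    (hlb : ∀ s : ℝ, ℓ ≤ s → U₀ s ≥ K * Real.log (s / ℓ) ^ σ) :
    ∀ t : ℝ, ℓ' ≤ t → U₀ t ≥
      (C * K ^ p / ((μ + 1) * (1 + p * σ))) * (1 - ℓ / ℓ') ^ (μ + 1)
        * Real.log (t / ℓ') ^ (p * σ + 1) := by
  intro t ht
  have hℓ'1 : (1:ℝ) ≤ ℓ' := le_of_lt (lt_of_le_of_lt hℓ hℓℓ')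
  have hℓ'pos : (0:ℝ) < ℓ' := lt_of_lt_of_le one_pos hℓ'1
  have hℓpos : (0:ℝ) < ℓ := lt_of_lt_of_le one_pos hℓ
  have ht1 : (1:ℝ) ≤ t := le_trans hℓ'1 ht
  have htpos : (0:ℝ) < t := lt_of_lt_of_le one_pos ht1
  set x : ℝ := ℓ / ℓ' with hxdef
  have hx0 : 0 < x := div_pos hℓpos hℓ'pos
  have hx1 : x < 1 := (div_lt_one hℓ'pos).mpr hℓℓ'
  set q : ℝ := p * σ with hqdef
  have hq0 : 0 < q := mul_pos (lt_trans one_pos hp) hσ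
  set f : ℝ → ℝ := fun s => s ^ (μ - 2) * U₀ s ^ p with hfdef
  -- continuity and nonnegativity of the inner integrand
  have hfcont : ContinuousOn f (Ici (1:ℝ)) := by
    apply ContinuousOn.mul
    · exact (continuousOn_id).rpow_const fun s hs => Or.inl (by
        have : (1:ℝ) ≤ s := hs
        positivity)
    · exact hcont.rpow_const fun s hs => Or.inr (by positivity)
  have hfnn : ∀ s : ℝ, 1 ≤ s → 0 ≤ f s := by
    intro s hs
    have h1 : (0:ℝ) ≤ s := le_trans zero_le_one hs
    exact mul_nonneg (Real.rpow_nonneg h1 _) (Real.rpow_nonneg (hnonneg s hs) _)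
  have hfint : ∀ a b : ℝ, 1 ≤ a → 1 ≤ b → IntervalIntegrable f volume a b := by
    intro a b ha hb
    apply (hfcont.mono ?_).intervalIntegrable
    intro u hu
    rw [Set.mem_uIcc] at hu
    rcases hu with ⟨h1, _⟩ | ⟨h1, _⟩
    · exact le_trans ha h1
    · exact le_trans hb h1
  set g : ℝ → ℝ := fun τ => ∫ s in (1:ℝ)..τ, f s with hgdef
  have hgcont : ContinuousOn g (Icc (1:ℝ) t) := by
    have := intervalIntegral.continuousOn_primitive_interval
      (f := f) (μ := volume) (a := (1:ℝ)) (b := t)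
      ((hfcont.mono (by rw [uIcc_of_le ht1]; exact Icc_subset_Ici_self)).integrableOn_compact
        (by rw [uIcc_of_le ht1]; exact isCompact_Icc))
    rwa [uIcc_of_le ht1] at this
  -- Step B : pointwise lower bound on g for τ ∈ [ℓ', t]
  have hgnn : ∀ τ : ℝ, 1 ≤ τ → 0 ≤ g τ := by
    intro τ hτ
    exact intervalIntegral.integral_nonneg hτ fun s hs => hfnn s hs.1
  have hKp : (0:ℝ) < K ^ p := Real.rpow_pos_of_pos hK p
  have key : ∀ τ ∈ Icc ℓ' t, K ^ p * (1 - x ^ (μ+1)) / (μ+1) *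
      ((Real.log τ - Real.log ℓ') ^ q * τ⁻¹) ≤ τ ^ (-μ) * g τ := by
    intro τ hτ
    have hτℓ' : ℓ' ≤ τ := hτ.1
    have hτpos : (0:ℝ) < τ := lt_of_lt_of_le hℓ'pos hτℓ'
    have hτ1 : (1:ℝ) ≤ τ := le_trans hℓ'1 hτℓ'
    set a : ℝ := τ * x with hadef
    have haℓ : ℓ ≤ a := by
      rw [hadef, hxdef]
      rw [mul_div_assoc']
      rw [le_div_iff₀ hℓ'pos]
      nlinarith
    have ha1 : (1:ℝ) ≤ a := le_trans hℓ haℓ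
    have haτ : a ≤ τ := by nlinarith
    have hM0 : 0 ≤ Real.log τ - Real.log ℓ' :=
      sub_nonneg.mpr (Real.log_le_log hℓ'pos hτℓ')
    set M : ℝ := Real.log τ - Real.log ℓ' with hMdef
    -- split the integral
    have hsplit : g τ = (∫ s in (1:ℝ)..a, f s) + ∫ s in a..τ, f s := by
      rw [hgdef]
      exact (intervalIntegral.integral_add_adjacent_intervals
        (hfint 1 a le_rfl ha1) (hfint a τ ha1 hτ1)).symm
    have h1 : 0 ≤ ∫ s in (1:ℝ)..a, f s :=
      intervalIntegral.integral_nonneg ha1 fun s hs => hfnn s hs.1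
    -- pointwise bound on [a, τ]
    have hpw : ∀ s ∈ Icc a τ, K ^ p * M ^ q * τ ^ (-(2:ℝ)) * s ^ μ ≤ f s := by
      intro s hs
      have hsa : a ≤ s := hs.1
      have hsτ : s ≤ τ := hs.2
      have hs1 : (1:ℝ) ≤ s := le_trans ha1 hsa
      have hspos : (0:ℝ) < s := lt_of_lt_of_le one_pos hs1
      have hsℓ : ℓ ≤ s := le_trans haℓ hsa
      -- U₀ s ^ p ≥ K^p M^q
      have hlog : M ≤ Real.log (s / ℓ) := by
        have hdiv : τ / ℓ' ≤ s / ℓ := by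
          rw [div_le_div_iff₀ hℓ'pos hℓpos]
          calc τ * ℓ = (τ * x) * ℓ' := by
                rw [hxdef]; field_simp
            _ ≤ s * ℓ' := by
                exact mul_le_mul_of_nonneg_right hsa (le_of_lt hℓ'pos)
        calc M = Real.log (τ / ℓ') := by
              rw [Real.log_div (ne_of_gt hτpos) (ne_of_gt hℓ'pos)]
          _ ≤ Real.log (s / ℓ) := Real.log_le_log (div_pos hτpos hℓ'pos) hdiv
      have hUlb : K * M ^ σ ≤ U₀ s := by
        refine le_trans ?_ (hlb s hsℓ)
        exact mul_le_mul_of_nonneg_left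
          (Real.rpow_le_rpow hM0 hlog (le_of_lt hσ)) (le_of_lt hK)
      have hUp : K ^ p * M ^ q ≤ U₀ s ^ p := by
        have h0 : 0 ≤ K * M ^ σ :=
          mul_nonneg (le_of_lt hK) (Real.rpow_nonneg hM0 _)
        have := Real.rpow_le_rpow h0 hUlb (le_of_lt (lt_trans one_pos hp))
        calc K ^ p * M ^ q = (K * M ^ σ) ^ p := by
              rw [Real.mul_rpow (le_of_lt hK) (Real.rpow_nonneg hM0 _),
                ← Real.rpow_mul hM0, hqdef, mul_comm σ p]
          _ ≤ U₀ s ^ p := this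
      -- s ^ (μ - 2) ≥ τ^(-2) * s^μ
      have hsmu : τ ^ (-(2:ℝ)) * s ^ μ ≤ s ^ (μ - 2) := by
        have h2 : τ ^ (-(2:ℝ)) ≤ s ^ (-(2:ℝ)) :=
          Real.rpow_le_rpow_of_nonpos hspos hsτ (by norm_num)
        calc τ ^ (-(2:ℝ)) * s ^ μ ≤ s ^ (-(2:ℝ)) * s ^ μ :=
              mul_le_mul_of_nonneg_right h2 (Real.rpow_nonneg (le_of_lt hspos) _)
          _ = s ^ (μ - 2) := by
              rw [← Real.rpow_add hspos]; ring_nf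
      calc K ^ p * M ^ q * τ ^ (-(2:ℝ)) * s ^ μ
          = (τ ^ (-(2:ℝ)) * s ^ μ) * (K ^ p * M ^ q) := by ring
        _ ≤ s ^ (μ - 2) * (U₀ s ^ p) := by
            apply mul_le_mul hsmu hUp
              (mul_nonneg (le_of_lt hKp) (Real.rpow_nonneg hM0 _))
              (Real.rpow_nonneg (le_of_lt hspos) _)
        _ = f s := rfl
    -- integrate the pointwise bound
    have hintineq : (K ^ p * M ^ q * τ ^ (-(2:ℝ))) * ∫ s in a..τ, s ^ μ
        ≤ ∫ s in a..τ, f s := by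
      rw [← intervalIntegral.integral_const_mul]
      apply intervalIntegral.integral_mono_on haτ ?_ (hfint a τ ha1 hτ1)
      · intro s hs; exact hpw s hs
      · apply ContinuousOn.intervalIntegrable
        apply ContinuousOn.mul continuousOn_const
        apply ContinuousOn.rpow_const continuousOn_id
        intro s hs
        left
        rw [uIcc_of_le haτ] at hs
        have : (1:ℝ) ≤ s := le_trans ha1 hs.1
        positivity
    have hrpowint : ∫ s in a..τ, s ^ μ = (τ ^ (μ+1) - a ^ (μ+1)) / (μ+1) := by
      rw [integral_rpow (Or.inl (by linarith))]
    have hgτ : K ^ p * M ^ q * τ ^ (-(2:ℝ)) * ((τ ^ (μ+1) - a ^ (μ+1)) / (μ+1)) ≤ g τ := by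
      rw [hsplit]
      have := hintineq
      rw [hrpowint] at this
      linarith
    -- simplify the left side after multiplying by τ^(-μ)
    have haexp : a ^ (μ+1) = τ ^ (μ+1) * x ^ (μ+1) :=
      Real.mul_rpow (le_of_lt hτpos) (le_of_lt hx0)
    have hτexp : τ ^ (-μ) * (τ ^ (-(2:ℝ)) * τ ^ (μ+1)) = τ⁻¹ := by
      rw [← Real.rpow_add hτpos, ← Real.rpow_add hτpos]
      rw [show -μ + (-(2:ℝ) + (μ+1)) = -1 by ring, Real.rpow_neg_one]
    have hτμpos : 0 < τ ^ (-μ) := Real.rpow_pos_of_pos hτpos _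
    have step : τ ^ (-μ) * (K ^ p * M ^ q * τ ^ (-(2:ℝ)) * ((τ ^ (μ+1) - a ^ (μ+1)) / (μ+1)))
        ≤ τ ^ (-μ) * g τ := mul_le_mul_of_nonneg_left hgτ (le_of_lt hτμpos)
    refine le_trans (le_of_eq ?_) step
    rw [haexp]
    have h1 : τ ^ (μ+1) - τ ^ (μ+1) * x ^ (μ+1) = τ ^ (μ+1) * (1 - x ^ (μ+1)) := by ring
    rw [h1, ← hτexp]
    ring
  -- the outer integral via FTC
  set D : ℝ := K ^ p * (1 - x ^ (μ+1)) / (μ+1) with hDdef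
  set φ : ℝ → ℝ := fun τ => Real.log τ - Real.log ℓ' with hφdef
  have hφt0 : 0 ≤ φ t := sub_nonneg.mpr (Real.log_le_log hℓ'pos ht)
  have hφcont : ContinuousOn (fun τ : ℝ => φ τ ^ q * τ⁻¹) (uIcc ℓ' t) := by
    rw [uIcc_of_le ht]
    have hne : ∀ τ ∈ Icc ℓ' t, τ ≠ 0 := fun τ hτ =>
      ne_of_gt (lt_of_lt_of_le hℓ'pos hτ.1)
    apply ContinuousOn.mul
    · apply ContinuousOn.rpow_const
      · exact ((Real.continuousOn_log.mono (fun τ hτ => hne τ hτ)).sub continuousOn_const)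
      · intro τ hτ; exact Or.inr (le_of_lt hq0)
    · exact ContinuousOn.inv₀ continuousOn_id hne
  have hderiv : ∀ τ ∈ uIcc ℓ' t,
      HasDerivAt (fun τ => φ τ ^ (q+1)) ((q+1) * (φ τ ^ q * τ⁻¹)) τ := by
    intro τ hτ
    rw [uIcc_of_le ht] at hτ
    have hτpos : (0:ℝ) < τ := lt_of_lt_of_le hℓ'pos hτ.1
    have hφd : HasDerivAt φ τ⁻¹ τ := by
      exact (Real.hasDerivAt_log (ne_of_gt hτpos)).sub_const (Real.log ℓ')
    have := hφd.rpow_const (p := q + 1) (Or.inr (by linarith))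
    convert this using 1
    rw [show q + 1 - 1 = q by ring]
    ring
  have hFTC : ∫ τ in ℓ'..t, (q+1) * (φ τ ^ q * τ⁻¹) = φ t ^ (q+1) := by
    rw [intervalIntegral.integral_eq_sub_of_hasDerivAt hderiv
      (by exact (continuousOn_const.mul hφcont).intervalIntegrable)]
    have : φ ℓ' = 0 := by simp [hφdef]
    rw [this, Real.zero_rpow (by positivity)]
    ring
  have houtint : ∫ τ in ℓ'..t, D * (φ τ ^ q * τ⁻¹) = D / (q+1) * φ t ^ (q+1) := by
    rw [intervalIntegral.integral_const_mul]
    have h2 : ∫ τ in ℓ'..t, φ τ ^ q * τ⁻¹ = φ t ^ (q+1) / (q+1) := by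
      rw [← hFTC, intervalIntegral.integral_const_mul]
      field_simp
    rw [h2]; ring
  -- the full outer integrand is continuous, hence integrable
  have hHcont : ContinuousOn (fun τ : ℝ => τ ^ (-μ) * g τ) (Icc 1 t) := by
    apply ContinuousOn.mul ?_ hgcont
    apply ContinuousOn.rpow_const continuousOn_id
    intro τ hτ
    exact Or.inl (ne_of_gt (lt_of_lt_of_le one_pos hτ.1))
  have hHint : ∀ a b : ℝ, a ∈ Icc (1:ℝ) t → b ∈ Icc (1:ℝ) t →
      IntervalIntegrable (fun τ : ℝ => τ ^ (-μ) * g τ) volume a b := by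
    intro a b ha hb
    apply (hHcont.mono ?_).intervalIntegrable
    intro u hu
    rw [Set.mem_uIcc] at hu
    rcases hu with ⟨h1, h2⟩ | ⟨h1, h2⟩
    · exact ⟨le_trans ha.1 h1, le_trans h2 hb.2⟩
    · exact ⟨le_trans hb.1 h1, le_trans h2 ha.2⟩
  have hℓ'mem : ℓ' ∈ Icc (1:ℝ) t := ⟨hℓ'1, ht⟩
  have h1mem : (1:ℝ) ∈ Icc (1:ℝ) t := ⟨le_rfl, ht1⟩
  have htmem : t ∈ Icc (1:ℝ) t := ⟨ht1, le_rfl⟩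
  -- compare integrals on [ℓ', t]
  have hmono : ∫ τ in ℓ'..t, D * (φ τ ^ q * τ⁻¹) ≤ ∫ τ in ℓ'..t, τ ^ (-μ) * g τ := by
    apply intervalIntegral.integral_mono_on ht
      ((continuousOn_const.mul hφcont).intervalIntegrable)
      (hHint ℓ' t hℓ'mem htmem)
    intro τ hτ
    have := key τ hτ
    calc D * (φ τ ^ q * τ⁻¹) = K ^ p * (1 - x ^ (μ+1)) / (μ+1) * (φ τ ^ q * τ⁻¹) := by
          rw [hDdef]
      _ ≤ τ ^ (-μ) * g τ := this
  -- split [1, t] = [1, ℓ'] ∪ [ℓ', t]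
  have hsplit2 : ∫ τ in (1:ℝ)..t, τ ^ (-μ) * g τ
      = (∫ τ in (1:ℝ)..ℓ', τ ^ (-μ) * g τ) + ∫ τ in ℓ'..t, τ ^ (-μ) * g τ :=
    (intervalIntegral.integral_add_adjacent_intervals
      (hHint 1 ℓ' h1mem hℓ'mem) (hHint ℓ' t hℓ'mem htmem)).symm
  have hfirst : 0 ≤ ∫ τ in (1:ℝ)..ℓ', τ ^ (-μ) * g τ := by
    apply intervalIntegral.integral_nonneg hℓ'1
    intro τ hτ
    exact mul_nonneg (Real.rpow_nonneg (le_trans zero_le_one hτ.1) _) (hgnn τ hτ.1)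
  have hframe' := hframe t ht1
  have hchain : C * (D / (q+1) * φ t ^ (q+1)) ≤ U₀ t := by
    refine le_trans ?_ hframe'
    apply mul_le_mul_of_nonneg_left ?_ (le_of_lt hC)
    rw [← houtint]
    rw [hsplit2]
    linarith [hmono, hfirst]
  -- final comparison of constants
  have hxe1 : (1 - x) ^ (μ+1) ≤ 1 - x ^ (μ+1) := by
    have h1 : (1-x) ^ (μ+1) ≤ (1-x) ^ (1:ℝ) :=
      Real.rpow_le_rpow_of_exponent_ge (by linarith) (by linarith) (by linarith)
    have h2 : x ^ (μ+1) ≤ x ^ (1:ℝ) :=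
      Real.rpow_le_rpow_of_exponent_ge hx0 (le_of_lt hx1) (by linarith)
    rw [Real.rpow_one] at h1 h2
    linarith
  have hlogt : Real.log (t / ℓ') = φ t := Real.log_div (ne_of_gt htpos) (ne_of_gt hℓ'pos)
  refine le_trans ?_ hchain
  rw [hlogt, show p * σ + 1 = q + 1 from rfl]
  have hrhs : C * (D / (q+1) * φ t ^ (q+1))
      = C * K ^ p / ((μ + 1) * (1 + q)) * (1 - x ^ (μ+1)) * φ t ^ (q+1) := by
    rw [hDdef]
    have hμ1 : (μ:ℝ) + 1 ≠ 0 := by linarith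
    have hq1 : (1:ℝ) + q ≠ 0 := by linarith
    field_simp
    ring
  rw [hrhs]
  have hA : 0 ≤ C * K ^ p / ((μ + 1) * (1 + q)) := by positivity
  have hB : 0 ≤ φ t ^ (q+1) := Real.rpow_nonneg hφt0 _
  exact mul_le_mul_of_nonneg_right (mul_le_mul_of_nonneg_left hxe1 hA) hB
end

section
/- Let μ ≥ 0, p > 1, C > 0, c > 0. Let U₀ : [1,∞) → ℝ be continuous with U₀(s) ≥ c for all s ≥ 1, and assume U₀(t) ≥ C ∫₁ᵗ τ^{−μ} ( ∫₁^τ s^{μ−2} U₀(s)^p ds ) dτ for all t ≥ 1. Then for all t ≥ 3/2 one has U₀(t) ≥ (C c^p / (3^{μ+1}(μ+1))) · log(2t/3). -/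
/-- Base case of the slicing iteration argument for the critical case `p = p₁(k,n)`:
a constant lower bound yields a logarithmic lower bound. -/
theorem stmt19 (μ p C c : ℝ) (hμ : 0 ≤ μ) (hp : 1 < p) (hC : 0 < C) (hc : 0 < c)
    (U₀ : ℝ → ℝ) (hcont : ContinuousOn U₀ (Set.Ici 1))
    (hlb : ∀ s : ℝ, 1 ≤ s → c ≤ U₀ s)
    (hframe : ∀ t : ℝ, 1 ≤ t → U₀ t ≥
      C * ∫ τ in (1 : ℝ)..t, τ ^ (-μ) * ∫ s in (1 : ℝ)..τ, s ^ (μ - 2) * U₀ s ^ p) :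
    ∀ t : ℝ, 3 / 2 ≤ t → U₀ t ≥
      (C * c ^ p / ((3 : ℝ) ^ (μ + 1) * (μ + 1))) * Real.log (2 * t / 3) := by
  intro t ht
  have ht1 : (1:ℝ) ≤ t := by linarith
  set K : ℝ := (3:ℝ) ^ (μ + 1) * (μ + 1) with hKdef
  have h3pos : (0:ℝ) < (3:ℝ) ^ (μ + 1) := Real.rpow_pos_of_pos (by norm_num) _
  have hK0 : 0 < K := mul_pos h3pos (by linarith)
  have hcp : (0:ℝ) < c ^ p := Real.rpow_pos_of_pos hc p
  have hp0 : (0:ℝ) ≤ p := by linarith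
  -- continuity of the inner integrand on [1, ∞)
  have hg : ContinuousOn (fun s : ℝ => s ^ (μ - 2) * U₀ s ^ p) (Set.Ici 1) := by
    apply ContinuousOn.mul
    · intro s hs
      exact (Real.continuousAt_rpow_const s (μ - 2)
        (Or.inl (by simp only [Set.mem_Ici] at hs; linarith))).continuousWithinAt
    · exact hcont.rpow_const (fun s hs => Or.inl (by
        have := hlb s hs; intro h; rw [h] at this; linarith))
  have hgInt : ∀ τ : ℝ, 1 ≤ τ →
      IntervalIntegrable (fun s : ℝ => s ^ (μ - 2) * U₀ s ^ p) MeasureTheory.volume 1 τ := by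
    intro τ hτ
    apply ContinuousOn.intervalIntegrable
    apply hg.mono
    rw [Set.uIcc_of_le hτ]
    exact fun x hx => hx.1
  -- nonnegativity of the inner integrand
  have hgnn : ∀ s : ℝ, 1 ≤ s → 0 ≤ s ^ (μ - 2) * U₀ s ^ p := by
    intro s hs
    have h1 : (0:ℝ) < s := by linarith
    have h2 : (0:ℝ) ≤ U₀ s := le_trans hc.le (hlb s hs)
    positivity
  -- key pointwise lower bound for the outer integrand on [3/2, t]
  have key : ∀ τ ∈ Set.Icc (3/2 : ℝ) t,
      c ^ p / K * τ⁻¹ ≤ τ ^ (-μ) * ∫ s in (1:ℝ)..τ, s ^ (μ - 2) * U₀ s ^ p := by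
    intro τ hτ
    obtain ⟨hτ32, hτt⟩ := hτ
    have hτ1 : (1:ℝ) ≤ τ := by linarith
    have hτ0 : (0:ℝ) < τ := by linarith
    -- lower bound the inner integral
    have hmono : ∫ s in (1:ℝ)..τ, c ^ p * τ ^ (-2:ℝ) * (s-1) ^ μ ≤
        ∫ s in (1:ℝ)..τ, s ^ (μ - 2) * U₀ s ^ p := by
      apply intervalIntegral.integral_mono_on hτ1
      · have : IntervalIntegrable (fun u : ℝ => u ^ μ) MeasureTheory.volume 0 (τ - 1) :=
          intervalIntegral.intervalIntegrable_rpow' (by linarith)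
        have := (this.comp_sub_right 1).const_mul (c ^ p * τ ^ (-2:ℝ))
        simpa using this
      · exact hgInt τ hτ1
      · intro s hs
        obtain ⟨hs1, hsτ⟩ := hs
        have hs0 : (0:ℝ) < s := by linarith
        have e1 : (s - 1) ^ μ ≤ s ^ μ := Real.rpow_le_rpow (by linarith) (by linarith) hμ
        have e2 : τ ^ (-2:ℝ) ≤ s ^ (-2:ℝ) :=
          Real.rpow_le_rpow_of_nonpos hs0 hsτ (by norm_num)
        have e3 : c ^ p ≤ U₀ s ^ p := Real.rpow_le_rpow hc.le (hlb s hs1) hp0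
        have hU : (0:ℝ) < U₀ s := lt_of_lt_of_le hc (hlb s hs1)
        calc c ^ p * τ ^ (-2:ℝ) * (s-1) ^ μ
            ≤ U₀ s ^ p * s ^ (-2:ℝ) * s ^ μ := by
              apply mul_le_mul _ e1 (Real.rpow_nonneg (by linarith) μ)
                (mul_nonneg (Real.rpow_nonneg hU.le p) (Real.rpow_nonneg hs0.le _))
              exact mul_le_mul e3 e2 (Real.rpow_nonneg hτ0.le _) (Real.rpow_nonneg hU.le p)
          _ = s ^ (μ - 2) * U₀ s ^ p := by
              rw [show μ - 2 = μ + (-2:ℝ) by ring, Real.rpow_add hs0]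
              ring
    have hval : ∫ s in (1:ℝ)..τ, c ^ p * τ ^ (-2:ℝ) * (s-1) ^ μ =
        c ^ p * τ ^ (-2:ℝ) * ((τ-1) ^ (μ+1) / (μ+1)) := by
      rw [intervalIntegral.integral_const_mul]
      congr 1
      have := intervalIntegral.integral_comp_sub_right (a := (1:ℝ)) (b := τ)
        (fun u : ℝ => u ^ μ) 1
      simp only [sub_self] at this
      rw [this, integral_rpow (Or.inl (by linarith))]
      simp [Real.zero_rpow (by linarith : μ + 1 ≠ 0)]
    -- compare with the explicit lower bound
    have hτ3 : τ / 3 ≤ τ - 1 := by linarith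
    have htau3 : (τ/3) ^ (μ+1) ≤ (τ-1) ^ (μ+1) :=
      Real.rpow_le_rpow (by linarith) hτ3 (by linarith)
    have hfinal : c ^ p / K * τ⁻¹ ≤ τ ^ (-μ) * (c ^ p * τ ^ (-2:ℝ) * ((τ-1) ^ (μ+1) / (μ+1))) := by
      have h1 : c ^ p / K * τ⁻¹ = τ ^ (-μ) * (c ^ p * τ ^ (-2:ℝ) * ((τ/3) ^ (μ+1) / (μ+1))) := by
        rw [Real.div_rpow (by linarith) (by norm_num)]
        rw [show (τ:ℝ)⁻¹ = τ ^ (-1:ℝ) by rw [Real.rpow_neg_one]]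
        rw [show (-1:ℝ) = -μ + (-2 + (μ+1)) by ring]
        rw [Real.rpow_add hτ0, Real.rpow_add hτ0, hKdef]
        field_simp
      rw [h1]
      have hτμ : (0:ℝ) ≤ τ ^ (-μ) := (Real.rpow_pos_of_pos hτ0 _).le
      apply mul_le_mul_of_nonneg_left _ hτμ
      apply mul_le_mul_of_nonneg_left _ (by positivity)
      exact div_le_div_of_nonneg_right htau3 (by linarith)
    calc c ^ p / K * τ⁻¹ ≤ τ ^ (-μ) * (c ^ p * τ ^ (-2:ℝ) * ((τ-1) ^ (μ+1) / (μ+1))) := hfinal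
      _ ≤ τ ^ (-μ) * ∫ s in (1:ℝ)..τ, s ^ (μ - 2) * U₀ s ^ p := by
          rw [← hval]
          exact mul_le_mul_of_nonneg_left hmono (Real.rpow_pos_of_pos hτ0 _).le
  -- integrability / continuity of the outer integrand on [1, t]
  have hF : ContinuousOn
      (fun τ : ℝ => τ ^ (-μ) * ∫ s in (1:ℝ)..τ, s ^ (μ - 2) * U₀ s ^ p) (Set.Icc 1 t) := by
    apply ContinuousOn.mul
    · intro τ hτ
      exact (Real.continuousAt_rpow_const τ (-μ)
        (Or.inl (by have := hτ.1; intro h; rw [h] at this; linarith))).continuousWithinAt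
    · have hI : MeasureTheory.IntegrableOn (fun s : ℝ => s ^ (μ - 2) * U₀ s ^ p)
          (Set.uIcc 1 t) MeasureTheory.volume := by
        rw [Set.uIcc_of_le ht1]
        exact (hg.mono (fun x hx => hx.1)).integrableOn_Icc
      have := intervalIntegral.continuousOn_primitive_interval hI
      rw [Set.uIcc_of_le ht1] at this
      exact this
  have hFnn : ∀ τ ∈ Set.Icc (1:ℝ) t,
      0 ≤ τ ^ (-μ) * ∫ s in (1:ℝ)..τ, s ^ (μ - 2) * U₀ s ^ p := by
    intro τ hτ
    have hτ0 : (0:ℝ) < τ := by have := hτ.1; linarith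
    apply mul_nonneg (Real.rpow_pos_of_pos hτ0 _).le
    apply intervalIntegral.integral_nonneg hτ.1
    intro s hs
    exact hgnn s hs.1
  set F : ℝ → ℝ := fun τ => τ ^ (-μ) * ∫ s in (1:ℝ)..τ, s ^ (μ - 2) * U₀ s ^ p with hFdef
  have hFint : ∀ a b : ℝ, 1 ≤ a → a ≤ b → b ≤ t →
      IntervalIntegrable F MeasureTheory.volume a b := by
    intro a b ha hab hbt
    apply ContinuousOn.intervalIntegrable
    apply hF.mono
    rw [Set.uIcc_of_le hab]
    exact fun x hx => ⟨le_trans ha hx.1, le_trans hx.2 hbt⟩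
  -- split the integral
  have hsplit : ∫ τ in (1:ℝ)..t, F τ =
      (∫ τ in (1:ℝ)..(3/2:ℝ), F τ) + ∫ τ in (3/2:ℝ)..t, F τ :=
    (intervalIntegral.integral_add_adjacent_intervals
      (hFint 1 (3/2) le_rfl (by norm_num) ht) (hFint (3/2) t (by norm_num) ht le_rfl)).symm
  have h1 : 0 ≤ ∫ τ in (1:ℝ)..(3/2:ℝ), F τ := by
    apply intervalIntegral.integral_nonneg (by norm_num)
    intro τ hτ
    exact hFnn τ ⟨hτ.1, le_trans hτ.2 ht⟩
  have h2 : c ^ p / K * Real.log (2 * t / 3) ≤ ∫ τ in (3/2:ℝ)..t, F τ := by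
    have hinv : IntervalIntegrable (fun τ : ℝ => c ^ p / K * τ⁻¹)
        MeasureTheory.volume (3/2) t := by
      apply ContinuousOn.intervalIntegrable
      apply ContinuousOn.mul continuousOn_const
      apply ContinuousOn.inv₀ continuousOn_id
      intro x hx
      rw [Set.uIcc_of_le ht] at hx
      have := hx.1; intro h; simp only [id_eq] at h; rw [h] at this; norm_num at this
    have hmono2 : ∫ τ in (3/2:ℝ)..t, c ^ p / K * τ⁻¹ ≤ ∫ τ in (3/2:ℝ)..t, F τ := by
      apply intervalIntegral.integral_mono_on ht hinv (hFint (3/2) t (by norm_num) ht le_rfl)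
      intro τ hτ
      exact key τ hτ
    have hcomp : ∫ τ in (3/2:ℝ)..t, c ^ p / K * τ⁻¹ = c ^ p / K * Real.log (2 * t / 3) := by
      rw [intervalIntegral.integral_const_mul, integral_inv_of_pos (by norm_num) (by linarith)]
      congr 1
      rw [show (2 * t / 3 : ℝ) = t / (3/2) by ring]
    linarith
  have hmain := hframe t ht1
  have hint : c ^ p / K * Real.log (2 * t / 3) ≤ ∫ τ in (1:ℝ)..t, F τ := by
    rw [hsplit]; linarith
  have : C * (c ^ p / K * Real.log (2 * t / 3)) ≤ C * ∫ τ in (1:ℝ)..t, F τ :=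
    mul_le_mul_of_nonneg_left hint hC.le
  have heq : C * c ^ p / K * Real.log (2 * t / 3) = C * (c ^ p / K * Real.log (2 * t / 3)) := by
    ring
  calc (C * c ^ p / K) * Real.log (2 * t / 3)
      = C * (c ^ p / K * Real.log (2 * t / 3)) := heq
    _ ≤ C * ∫ τ in (1:ℝ)..t, F τ := this
    _ ≤ U₀ t := hmain
end
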